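/- arXiv:2009.10487 — 7 statements merged into one kernel-verified Lean document; each statement's English description precedes it below -/
import Mathlib

section
/- Let Φ_f = (P_n, F^×, φ, f) be a skew gain graph whose underlying graph is the path P_n on n ≥ 2 vertices. Then its Laplacian characteristic polynomial is χ(Φ_f, x) = (x − 2)^{n−2}(x − 1)² + Σ_M (−1)^{|M|} · (∏_{e ∈ M} g(φ(e))) · ∏_{v ∉ V(M)} (x − d(v)), where the sum runs over all nonempty matchings M of P_n (sets of pairwise non-incident edges), |M| is the number of edges of M, V(M) is the set of vertices covered by M, and d(v) is the degree of v in P_n. -/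
/-!
In the Leibniz expansion of `det (x • 1 - L)` only permutations sending every vertex to itself
or to a neighbour survive. On a path these are involutions, i.e. they swap the two ends of each
edge of a matching `M` and fix the other vertices; such a permutation has sign `(-1)^|M|` and
contributes `∏_{uv ∈ M} φ(u,v) φ(v,u) · ∏_{v ∉ V(M)} (x - d(v))`. The empty matching gives
`(x - 2)^(n-2) (x - 1)^2`, since the two end vertices have degree 1 and the others degree 2.
-/

open scoped Classical
open Matrix Finset SimpleGraph

variable {F V : Type*}

/-- The adjacency matrix of a skew gain graph `(G, φ)`: the `(u,v)` entry is the skew gain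
`φ u v` if `u` and `v` are adjacent, and `0` otherwise. -/
noncomputable def sgAdj [Fintype V] [Field F] (G : SimpleGraph V) (φ : V → V → F) :
    Matrix V V F :=
  Matrix.of fun u v => if G.Adj u v then φ u v else 0

/-- The degree of a vertex `v` of `G`, i.e. the number of its neighbours. -/
noncomputable def sgDeg [Fintype V] (G : SimpleGraph V) (v : V) : ℕ :=
  (Finset.univ.filter fun u => G.Adj v u).card

/-- The Laplacian matrix `L(Φ_f) = D(Φ_f) - A(Φ_f)` of a skew gain graph. -/
noncomputable def sgLap [Fintype V] [DecidableEq V] [Field F] (G : SimpleGraph V)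
    (φ : V → V → F) : Matrix V V F :=
  Matrix.diagonal (fun v => (sgDeg G v : F)) - sgAdj G φ

/-- For an (unordered) edge `e = {u,v}`, the quantity `g(φ(e)) = φ(u,v) * φ(v,u)`; for a skew
gain graph this equals `φ(u,v) * f(φ(u,v))` and is independent of the orientation of `e`. -/
noncomputable def sgGainSq [Field F] (φ : V → V → F) : Sym2 V → F :=
  Sym2.lift ⟨fun u v => φ u v * φ v u, fun _ _ => mul_comm _ _⟩

/-- A (nonempty) matching in `G`, given as a set of edges of `G` that are pairwise
non-incident. -/
def IsMatchingSet {V : Type*} (G : SimpleGraph V) (M : Finset (Sym2 V)) : Prop :=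
  (∀ e ∈ M, e ∈ G.edgeSet) ∧
    ∀ e ∈ M, ∀ e' ∈ M, e ≠ e' → ∀ v : V, ¬(v ∈ e ∧ v ∈ e')

noncomputable def matchingPartner (M : Finset (Sym2 V)) (v : V) : V :=
  if h : ∃ e ∈ M, v ∈ e then Sym2.Mem.other h.choose_spec.2 else v

theorem matchingPartner_of_forall_notMem {M : Finset (Sym2 V)} {v : V} (h : ∀ e ∈ M, v ∉ e) :
    matchingPartner M v = v := by
  rw [matchingPartner, dif_neg (by simpa using h)]

namespace IsMatchingSet

variable {G : SimpleGraph V} {M : Finset (Sym2 V)}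

theorem eq_of_mem_of_mem (hM : IsMatchingSet G M) {e e' : Sym2 V} (he : e ∈ M) (he' : e' ∈ M)
    {v : V} (hv : v ∈ e) (hv' : v ∈ e') : e = e' :=
  by_contra fun hne => hM.2 e he e' he' hne v ⟨hv, hv'⟩

theorem mono {M' : Finset (Sym2 V)} (hM : IsMatchingSet G M) (hM' : M' ⊆ M) :
    IsMatchingSet G M' :=
  ⟨fun e he => hM.1 e (hM' he), fun e he e' he' => hM.2 e (hM' he) e' (hM' he')⟩

theorem mk_matchingPartner (hM : IsMatchingSet G M) {e : Sym2 V} (he : e ∈ M) {v : V}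
    (hv : v ∈ e) : s(v, matchingPartner M v) = e := by
  have h : ∃ e ∈ M, v ∈ e := ⟨e, he, hv⟩
  rw [matchingPartner, dif_pos h, Sym2.other_spec]
  exact hM.eq_of_mem_of_mem h.choose_spec.1 he h.choose_spec.2 hv

theorem matchingPartner_left (hM : IsMatchingSet G M) {a b : V} (h : s(a, b) ∈ M) :
    matchingPartner M a = b :=
  Sym2.congr_right.mp (hM.mk_matchingPartner h (Sym2.mem_mk_left a b))

theorem matchingPartner_right (hM : IsMatchingSet G M) {a b : V} (h : s(a, b) ∈ M) :
    matchingPartner M b = a :=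
  hM.matchingPartner_left (Sym2.eq_swap ▸ h)

theorem matchingPartner_mem (hM : IsMatchingSet G M) {e : Sym2 V} (he : e ∈ M) {v : V}
    (hv : v ∈ e) : matchingPartner M v ∈ e :=
  hM.mk_matchingPartner he hv ▸ Sym2.mem_mk_right _ _

theorem involutive_matchingPartner (hM : IsMatchingSet G M) :
    Function.Involutive (matchingPartner M) := by
  intro v
  by_cases h : ∃ e ∈ M, v ∈ e
  · obtain ⟨e, he, hv⟩ := h
    induction e using Sym2.ind with
    | _ a b =>
    rcases Sym2.mem_iff.mp hv with rfl | rfl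
    · rw [hM.matchingPartner_left he, hM.matchingPartner_right he]
    · rw [hM.matchingPartner_right he, hM.matchingPartner_left he]
  · push Not at h
    rw [matchingPartner_of_forall_notMem h, matchingPartner_of_forall_notMem h]

noncomputable def perm (hM : IsMatchingSet G M) : Equiv.Perm V :=
  hM.involutive_matchingPartner.toPerm

@[simp] theorem perm_apply (hM : IsMatchingSet G M) (v : V) :
    hM.perm v = matchingPartner M v := rfl

theorem perm_apply_eq_or_adj (hM : IsMatchingSet G M) (v : V) :
    hM.perm v = v ∨ G.Adj (hM.perm v) v := by
  by_cases h : ∃ e ∈ M, v ∈ e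
  · obtain ⟨e, he, hv⟩ := h
    have hE := hM.1 e he
    rw [← hM.mk_matchingPartner he hv, mem_edgeSet] at hE
    exact Or.inr hE.symm
  · push Not at h
    exact Or.inl (matchingPartner_of_forall_notMem h)

theorem perm_insert [DecidableEq V] {a b : V} (hM : IsMatchingSet G (insert s(a, b) M))
    (hab : s(a, b) ∉ M) :
    hM.perm = Equiv.swap a b * (hM.mono (subset_insert _ _)).perm := by
  have hM' := hM.mono (subset_insert _ _)
  have hfree : ∀ e ∈ M, ∀ v ∈ s(a, b), v ∉ e := fun e he v hv hve =>
    hab (hM.eq_of_mem_of_mem (mem_insert_self _ _) (mem_insert_of_mem he) hv hve ▸ he)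
  ext v
  simp only [perm_apply, Equiv.Perm.coe_mul, Function.comp_apply]
  by_cases hv : v ∈ s(a, b)
  · rcases Sym2.mem_iff.mp hv with rfl | rfl
    · rw [matchingPartner_of_forall_notMem (fun e he => hfree e he _ hv),
        hM.matchingPartner_left (mem_insert_self _ _), Equiv.swap_apply_left]
    · rw [matchingPartner_of_forall_notMem (fun e he => hfree e he _ hv),
        hM.matchingPartner_right (mem_insert_self _ _), Equiv.swap_apply_right]
  · have hva : v ≠ a := fun h => hv (h ▸ Sym2.mem_mk_left _ _)
    have hvb : v ≠ b := fun h => hv (h ▸ Sym2.mem_mk_right _ _)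
    by_cases hcov : ∃ e ∈ M, v ∈ e
    · obtain ⟨e, he, hve⟩ := hcov
      have hw := hM'.matchingPartner_mem he hve
      have hwa : matchingPartner M v ≠ a := fun h => hfree e he a (Sym2.mem_mk_left _ _) (h ▸ hw)
      have hwb : matchingPartner M v ≠ b := fun h => hfree e he b (Sym2.mem_mk_right _ _) (h ▸ hw)
      rw [Equiv.swap_apply_of_ne_of_ne hwa hwb]
      exact Sym2.congr_right.mp ((hM.mk_matchingPartner (mem_insert_of_mem he) hve).trans
        (hM'.mk_matchingPartner he hve).symm)
    · push Not at hcov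
      rw [matchingPartner_of_forall_notMem hcov, matchingPartner_of_forall_notMem,
        Equiv.swap_apply_of_ne_of_ne hva hvb]
      simpa [hv] using hcov

theorem sign_perm [Fintype V] [DecidableEq V] (hM : IsMatchingSet G M) :
    Equiv.Perm.sign hM.perm = (-1) ^ M.card := by
  induction M using Finset.induction_on with
  | empty =>
    have : hM.perm = 1 := by
      ext v
      exact matchingPartner_of_forall_notMem fun e he => absurd he (notMem_empty e)
    simp [this]
  | @insert e M he IH =>
    induction e using Sym2.ind with
    | _ a b =>
    have hab : a ≠ b := G.ne_of_adj (hM.1 _ (mem_insert_self _ _))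
    rw [hM.perm_insert he, Equiv.Perm.sign_mul, Equiv.Perm.sign_swap hab, IH,
      card_insert_of_notMem he, pow_succ']

theorem prod_perm_apply [Fintype V] [DecidableEq V] [Field F] (hM : IsMatchingSet G M)
    (A : Matrix V V F) :
    ∏ v, A (hM.perm v) v
      = (∏ e ∈ M, sgGainSq A e) * ∏ v ∈ univ.filter (fun v => ∀ e ∈ M, v ∉ e), A v v := by
  have hcovered : univ.filter (fun v => ¬ ∀ e ∈ M, v ∉ e) = M.biUnion Sym2.toFinset := by
    ext v
    simp [Sym2.mem_toFinset]
  have hdisj : (M : Set (Sym2 V)).PairwiseDisjoint Sym2.toFinset :=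
    fun e he e' he' hne => disjoint_left.mpr fun v hv hv' =>
      hM.2 e he e' he' hne v ⟨Sym2.mem_toFinset.mp hv, Sym2.mem_toFinset.mp hv'⟩
  rw [← prod_filter_not_mul_prod_filter univ (fun v => ∀ e ∈ M, v ∉ e), hcovered,
    prod_biUnion hdisj]
  congr 1
  · refine prod_congr rfl fun e he => ?_
    induction e using Sym2.ind with
    | _ a b =>
    have hab : a ≠ b := G.ne_of_adj (hM.1 _ he)
    rw [Sym2.toFinset_mk_eq, prod_pair hab, perm_apply, perm_apply,
      hM.matchingPartner_left he, hM.matchingPartner_right he, mul_comm]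
    rfl
  · refine prod_congr rfl fun v hv => ?_
    rw [perm_apply, matchingPartner_of_forall_notMem (mem_filter.mp hv).2]

end IsMatchingSet

noncomputable def Equiv.Perm.movedPairs [Fintype V] (σ : Equiv.Perm V) : Finset (Sym2 V) :=
  (univ.filter fun i => σ i ≠ i).image fun i => s(i, σ i)

namespace Equiv.Perm

variable {σ : Equiv.Perm V}

theorem mk_apply_eq_of_mem_mk_apply (hσ : Function.Involutive σ) {i v : V}
    (hv : v ∈ s(i, σ i)) : s(v, σ v) = s(i, σ i) := by
  rcases Sym2.mem_iff.mp hv with rfl | rfl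
  · rfl
  · rw [hσ i, Sym2.eq_swap]

variable [Fintype V]

theorem mem_movedPairs {e : Sym2 V} : e ∈ σ.movedPairs ↔ ∃ i, σ i ≠ i ∧ s(i, σ i) = e := by
  simp [movedPairs]

theorem isMatchingSet_movedPairs {G : SimpleGraph V} (hσ : ∀ i, σ i = i ∨ G.Adj (σ i) i)
    (hinv : Function.Involutive σ) : IsMatchingSet G σ.movedPairs := by
  refine ⟨fun e he => ?_, fun e he e' he' hne v ⟨hv, hv'⟩ => hne ?_⟩
  · obtain ⟨i, hi, rfl⟩ := mem_movedPairs.mp he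
    exact (mem_edgeSet G).mpr ((hσ i).resolve_left hi).symm
  · obtain ⟨i, -, rfl⟩ := mem_movedPairs.mp he
    obtain ⟨j, -, rfl⟩ := mem_movedPairs.mp he'
    rw [← mk_apply_eq_of_mem_mk_apply hinv hv, ← mk_apply_eq_of_mem_mk_apply hinv hv']

theorem perm_isMatchingSet_movedPairs {G : SimpleGraph V} (hinv : Function.Involutive σ)
    (hM : IsMatchingSet G σ.movedPairs) : hM.perm = σ := by
  ext v
  by_cases hv : σ v = v
  · rw [IsMatchingSet.perm_apply, matchingPartner_of_forall_notMem, hv]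
    intro e he hve
    obtain ⟨i, hi, rfl⟩ := mem_movedPairs.mp he
    rcases Sym2.mem_iff.mp hve with rfl | rfl
    · exact hi hv
    · exact hi ((hinv i).symm.trans hv).symm
  · exact hM.matchingPartner_left (mem_movedPairs.mpr ⟨v, hv, rfl⟩)

end Equiv.Perm

theorem IsMatchingSet.movedPairs_perm [Fintype V] {G : SimpleGraph V} {M : Finset (Sym2 V)}
    (hM : IsMatchingSet G M) : hM.perm.movedPairs = M := by
  ext e
  rw [Equiv.Perm.mem_movedPairs]
  constructor
  · rintro ⟨i, hi, rfl⟩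
    by_cases h : ∀ e ∈ M, i ∉ e
    · exact absurd (matchingPartner_of_forall_notMem h) hi
    · push Not at h
      obtain ⟨e, he, hie⟩ := h
      rwa [IsMatchingSet.perm_apply, hM.mk_matchingPartner he hie]
  · intro he
    induction e using Sym2.ind with
    | _ a b =>
    refine ⟨a, ?_, ?_⟩ <;> rw [IsMatchingSet.perm_apply, hM.matchingPartner_left he]
    exact (G.ne_of_adj (hM.1 _ he)).symm

theorem det_eq_sum_isMatchingSet [Fintype V] [DecidableEq V] [Field F] {G : SimpleGraph V}
    (A : Matrix V V F) (hA : ∀ i j, i ≠ j → ¬ G.Adj i j → A i j = 0)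
    (hG : ∀ σ : Equiv.Perm V, (∀ i, σ i = i ∨ G.Adj (σ i) i) → Function.Involutive σ) :
    A.det = ∑ M ∈ univ.filter (IsMatchingSet G),
      (-1) ^ M.card * (∏ e ∈ M, sgGainSq A e) *
        ∏ v ∈ univ.filter (fun v => ∀ e ∈ M, v ∉ e), A v v := by
  have hsupp : A.det = ∑ σ ∈ univ.filter (fun σ : Equiv.Perm V => ∀ i, σ i = i ∨ G.Adj (σ i) i),
      Equiv.Perm.sign σ • ∏ i, A (σ i) i := by
    rw [det_apply]
    refine (sum_subset (subset_univ _) fun σ _ hσ => ?_).symm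
    obtain ⟨i, hi, hadj⟩ : ∃ i, σ i ≠ i ∧ ¬ G.Adj (σ i) i := by simpa using hσ
    rw [prod_eq_zero (f := fun j => A (σ j) j) (mem_univ i) (hA _ _ hi hadj), smul_zero]
  rw [hsupp]
  refine sum_bij' (fun σ _ => σ.movedPairs) (fun M hM => (mem_filter.mp hM).2.perm)
    (fun σ hσ => ?_) (fun M hM => ?_) (fun σ hσ => ?_) (fun M hM => ?_) (fun σ hσ => ?_)
  · have hσ := (mem_filter.mp hσ).2
    exact mem_filter.mpr ⟨mem_univ _, σ.isMatchingSet_movedPairs hσ (hG σ hσ)⟩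
  · exact mem_filter.mpr ⟨mem_univ _, (mem_filter.mp hM).2.perm_apply_eq_or_adj⟩
  · have hσ := (mem_filter.mp hσ).2
    exact Equiv.Perm.perm_isMatchingSet_movedPairs (hG σ hσ) _
  · exact (mem_filter.mp hM).2.movedPairs_perm
  · have hσ := (mem_filter.mp hσ).2
    have hM := σ.isMatchingSet_movedPairs hσ (hG σ hσ)
    conv_lhs => rw [← Equiv.Perm.perm_isMatchingSet_movedPairs (hG σ hσ) hM]
    rw [hM.sign_perm, hM.prod_perm_apply, mul_assoc]
    simp only [Units.smul_def, Units.val_pow_eq_pow_val, Units.val_neg, Units.val_one,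
      zsmul_eq_mul, Int.cast_pow, Int.cast_neg, Int.cast_one]

section Laplacian

variable [Fintype V] [DecidableEq V] [Field F] (G : SimpleGraph V) (φ : V → V → F) (x : F)

theorem smul_one_sub_sgLap_apply_self (v : V) :
    (x • (1 : Matrix V V F) - sgLap G φ) v v = x - sgDeg G v := by
  simp [sgLap, sgAdj]

theorem smul_one_sub_sgLap_apply_of_ne {i j : V} (hij : i ≠ j) :
    (x • (1 : Matrix V V F) - sgLap G φ) i j = if G.Adj i j then φ i j else 0 := by
  simp [sgLap, sgAdj, one_apply_ne hij, diagonal_apply_ne _ hij]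

theorem sgGainSq_smul_one_sub_sgLap {e : Sym2 V} (he : e ∈ G.edgeSet) :
    sgGainSq (x • (1 : Matrix V V F) - sgLap G φ) e = sgGainSq φ e := by
  induction e using Sym2.ind with
  | _ a b =>
  have hab : G.Adj a b := he
  simp only [sgGainSq, Sym2.lift_mk, smul_one_sub_sgLap_apply_of_ne G φ x hab.ne,
    smul_one_sub_sgLap_apply_of_ne G φ x hab.ne.symm, if_pos hab, if_pos hab.symm]

theorem det_smul_one_sub_sgLap
    (hG : ∀ σ : Equiv.Perm V, (∀ i, σ i = i ∨ G.Adj (σ i) i) → Function.Involutive σ) :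
    (x • (1 : Matrix V V F) - sgLap G φ).det = ∑ M ∈ univ.filter (IsMatchingSet G),
      (-1) ^ M.card * (∏ e ∈ M, sgGainSq φ e) *
        ∏ v ∈ univ.filter (fun v => ∀ e ∈ M, v ∉ e), (x - sgDeg G v : F) := by
  rw [det_eq_sum_isMatchingSet _ (fun i j hij hadj => by
    rw [smul_one_sub_sgLap_apply_of_ne G φ x hij, if_neg hadj]) hG]
  refine sum_congr rfl fun M hM => ?_
  rw [prod_congr rfl fun e he => sgGainSq_smul_one_sub_sgLap G φ x ((mem_filter.mp hM).2.1 e he),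
    prod_congr rfl fun v _ => smul_one_sub_sgLap_apply_self G φ x v]

end Laplacian

/-- By strong induction on `i`: if `σ i = i + 1`, then `σ⁻¹ i` can only be `i + 1`, since
`i - 1` is already paired with its own partner. -/
theorem pathGraph_involutive_of_forall_adj {n : ℕ} (σ : Equiv.Perm (Fin n))
    (hσ : ∀ i, σ i = i ∨ (pathGraph n).Adj (σ i) i) : Function.Involutive σ := by
  intro i
  induction i using WellFoundedLT.induction with
  | _ i IH =>
  rcases hσ i with hfix | hadj
  · rw [hfix, hfix]
  rcases pathGraph_adj.mp hadj with hleft | hright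
  · exact σ.injective (IH (σ i) (Fin.lt_def.mpr (by omega)))
  obtain ⟨k, rfl⟩ := σ.surjective i
  rcases hσ k with hk | hk
  · simp only [hk] at hright
    omega
  rcases pathGraph_adj.mp hk with hk | hk
  · exact congrArg σ (Fin.ext (by omega))
  · rw [IH k (Fin.lt_def.mpr (by omega))] at hright
    omega

section PathDegrees

variable {m : ℕ}

theorem sgDeg_pathGraph_zero : sgDeg (pathGraph (m + 2)) 0 = 1 := by
  refine card_eq_one.mpr ⟨1, ?_⟩
  ext u
  simp only [mem_filter, mem_univ, true_and, mem_singleton, pathGraph_adj, Fin.ext_iff,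
    Fin.val_zero, Fin.val_one]
  omega

theorem sgDeg_pathGraph_last : sgDeg (pathGraph (m + 2)) (Fin.last (m + 1)) = 1 := by
  refine card_eq_one.mpr ⟨⟨m, by omega⟩, ?_⟩
  ext u
  simp only [mem_filter, mem_univ, true_and, mem_singleton, pathGraph_adj, Fin.ext_iff,
    Fin.val_last]
  omega

theorem sgDeg_pathGraph_succ_castSucc (i : Fin m) :
    sgDeg (pathGraph (m + 2)) i.castSucc.succ = 2 := by
  refine card_eq_two.mpr ⟨⟨i, by omega⟩, ⟨i + 2, by omega⟩, by simp [Fin.ext_iff], ?_⟩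
  ext u
  simp only [mem_filter, mem_univ, true_and, mem_insert, mem_singleton, pathGraph_adj,
    Fin.ext_iff, Fin.val_succ, Fin.val_castSucc]
  omega

theorem prod_sub_sgDeg_pathGraph [Field F] (x : F) :
    ∏ v, (x - sgDeg (pathGraph (m + 2)) v) = (x - 2) ^ m * (x - 1) ^ 2 := by
  rw [Fin.prod_univ_succ, Fin.prod_univ_castSucc]
  simp only [sgDeg_pathGraph_succ_castSucc, Fin.succ_last, sgDeg_pathGraph_zero,
    sgDeg_pathGraph_last, prod_const, card_univ, Fintype.card_fin]
  push_cast
  ring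

end PathDegrees

theorem skewGainPath_laplacian_charpoly_general
    [Field F] (n : ℕ) (hn : 2 ≤ n)
    (φ : Fin n → Fin n → F) :
    ∀ x : F,
      (x • (1 : Matrix (Fin n) (Fin n) F) - sgLap (pathGraph n) φ).det =
        (x - 2) ^ (n - 2) * (x - 1) ^ 2 +
          ∑ M : Finset (Sym2 (Fin n)),
            if M.Nonempty ∧ IsMatchingSet (pathGraph n) M then
              (-1 : F) ^ M.card * (∏ e ∈ M, sgGainSq φ e) *
                ∏ v ∈ Finset.univ.filter (fun v => ∀ e ∈ M, v ∉ e),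
                  (x - (sgDeg (pathGraph n) v : F))
            else 0 := by
  intro x
  obtain ⟨m, rfl⟩ : ∃ m, n = m + 2 := ⟨n - 2, by omega⟩
  have hempty : ∅ ∈ univ.filter (IsMatchingSet (pathGraph (m + 2))) := by
    simp [IsMatchingSet]
  have hnonempty : univ.filter (fun M => M.Nonempty ∧ IsMatchingSet (pathGraph (m + 2)) M)
      = (univ.filter (IsMatchingSet (pathGraph (m + 2)))).erase ∅ := by
    ext M
    simp [nonempty_iff_ne_empty]
  rw [det_smul_one_sub_sgLap _ φ x pathGraph_involutive_of_forall_adj, ← add_sum_erase _ _ hempty,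
    ← sum_filter, hnonempty, Nat.add_sub_cancel, ← prod_sub_sgDeg_pathGraph]
  simp

/-- **Laplacian characteristic polynomial of a skew gain path** (Corollary 2.5).
For a skew gain graph on the path `P_n` (`n ≥ 2`), the Laplacian characteristic polynomial is
`(x-2)^(n-2) (x-1)² + Σ_M (-1)^{|M|} (Π_{e ∈ M} g(φ(e))) Π_{v ∉ V(M)} (x - d(v))`, the sum
running over all nonempty matchings `M` of `P_n`. -/
theorem skewGainPath_laplacian_charpoly
    [Field F] [CharZero F] (n : ℕ) (hn : 2 ≤ n)
    (f : F → F) (hf0 : f 0 = 0) (hf1 : f 1 = 1)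
    (hfmul : ∀ x y : F, f (x * y) = f x * f y) (hfinv : ∀ x : F, f (f x) = x)
    (φ : Fin n → Fin n → F)
    (hφ0 : ∀ u v, (pathGraph n).Adj u v → φ u v ≠ 0)
    (hφf : ∀ u v, (pathGraph n).Adj u v → φ v u = f (φ u v)) :
    ∀ x : F,
      (x • (1 : Matrix (Fin n) (Fin n) F) - sgLap (pathGraph n) φ).det =
        (x - 2) ^ (n - 2) * (x - 1) ^ 2 +
          ∑ M : Finset (Sym2 (Fin n)),
            if M.Nonempty ∧ IsMatchingSet (pathGraph n) M then
              (-1 : F) ^ M.card * (∏ e ∈ M, sgGainSq φ e) *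
                ∏ v ∈ Finset.univ.filter (fun v => ∀ e ∈ M, v ∉ e),
                  (x - (sgDeg (pathGraph n) v : F))
            else 0 :=
  skewGainPath_laplacian_charpoly_general n hn φ
end

section
/- Let Φ_f = (C_n, F^×, φ, f) be a skew gain graph whose underlying graph is the cycle C_n on n ≥ 3 vertices. Then its Laplacian characteristic polynomial is χ(Φ_f, x) = (x − 2)^n + (−1)^{n−1}(φ(C_n) + f(φ(C_n))) + Σ_M (−1)^{|M|} · (∏_{e ∈ M} g(φ(e))) · ∏_{v ∉ V(M)} (x − 2), where the sum runs over all nonempty matchings M of C_n (sets of pairwise non-incident edges), |M| is the number of edges of M, and V(M) is the set of vertices covered by M. -/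
open scoped Classical
open Matrix Finset SimpleGraph

variable {F V : Type*}

/-!
Every vertex of `C_n` has degree `2`, so `xI - L(Φ_f) = (x - 2)I + A(Φ_f)` is a periodic
tridiagonal matrix. In its Leibniz expansion only permutations moving each vertex by at most one
step along the cycle survive. For `n ≥ 3` these are the two rotations, contributing
`(-1)^(n-1) φ(C_n)` and `(-1)^(n-1) ∏ φ(v_{i+1}, v_i) = (-1)^(n-1) f(φ(C_n))`, and the
involutions swapping the two ends of each edge of a matching `M`, of sign `(-1)^|M|`,
contributing `(-1)^|M| ∏_{e ∈ M} g(φ(e)) (x - 2)^(n - 2|M|)`; the empty matching gives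
`(x - 2)^n`.
-/

theorem Equiv.Perm.sign_eq_neg_one_pow_card_support_div_two {α : Type*} [Fintype α]
    [DecidableEq α] {σ : Equiv.Perm α} (hσ : σ ^ 2 = 1) :
    Equiv.Perm.sign σ = (-1) ^ (#σ.support / 2) := by
  rw [Equiv.Perm.sign_of_pow_two_eq_one hσ, Equiv.Perm.card_fixedPoints,
    Equiv.Perm.sum_cycleType, Nat.sub_sub_self (Finset.card_le_univ _)]

theorem Matrix.det_eq_sum_of_exists_eq_zero {n R : Type*} [Fintype n] [DecidableEq n]
    [CommRing R] (M : Matrix n n R) (s : Finset (Equiv.Perm n))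
    (hs : ∀ σ ∉ s, ∃ i, M (σ i) i = 0) :
    M.det = ∑ σ ∈ s, Equiv.Perm.sign σ • ∏ i, M (σ i) i := by
  rw [Matrix.det_apply]
  refine (Finset.sum_subset (Finset.subset_univ s) fun σ _ hσ => ?_).symm
  obtain ⟨i, hi⟩ := hs σ hσ
  rw [Finset.prod_eq_zero (f := fun j => M (σ j) j) (Finset.mem_univ i) hi, smul_zero]

theorem Finset.mem_image_add_right_iff {α : Type*} [AddGroup α] [DecidableEq α]
    {s : Finset α} {a b : α} : b ∈ s.image (· + a) ↔ b - a ∈ s := by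
  simp only [Finset.mem_image, ← eq_sub_iff_add_eq, exists_eq_right]

theorem sgDeg_eq_degree [Fintype V] (G : SimpleGraph V) [DecidableRel G.Adj] (v : V) :
    sgDeg G v = G.degree v := by
  rw [sgDeg, ← G.card_neighborFinset_eq_degree]
  congr 1
  ext u
  simp

theorem smul_one_sub_sgLap_apply [Fintype V] [DecidableEq V] [Field F] (G : SimpleGraph V)
    (φ : V → V → F) (x : F) (u v : V) :
    (x • 1 - sgLap G φ) u v =
      if u = v then x - sgDeg G v else if G.Adj u v then φ u v else 0 := by
  by_cases h : u = v
  · subst h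
    simp [sgLap, sgAdj]
  · simp [sgLap, sgAdj, h, Matrix.one_apply_ne h]

namespace Fin

open Fin.CommRing

variable {n : ℕ}

theorem add_one_ne_self (i : Fin (n + 2)) : i + 1 ≠ i :=
  fun h => one_ne_zero (add_eq_left.mp h)

theorem sub_one_ne_self (i : Fin (n + 2)) : i - 1 ≠ i := by
  rw [Ne, sub_eq_iff_eq_add, eq_comm]
  exact add_one_ne_self i

theorem add_one_add_one_ne_self (i : Fin (n + 3)) : i + 1 + 1 ≠ i := by
  rw [add_assoc, Ne, add_eq_left, Fin.ext_iff]
  simp [Fin.val_add, Nat.mod_eq_of_lt (show 2 < n + 3 by omega)]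

end Fin

namespace SkewGainCycle

open Fin.CommRing Equiv

variable {m : ℕ}

theorem cycleGraph_adj_iff {n : ℕ} {u v : Fin (n + 2)} :
    (cycleGraph (n + 2)).Adj u v ↔ u = v + 1 ∨ u = v - 1 := by
  rw [cycleGraph_adj, sub_eq_iff_eq_add', sub_eq_iff_eq_add', eq_sub_iff_add_eq, add_comm v,
    add_comm u, @eq_comm _ v]

def MovesAtMostOne (σ : Perm (Fin (m + 3))) : Prop :=
  ∀ i, σ i = i ∨ σ i = i + 1 ∨ σ i = i - 1

theorem MovesAtMostOne.inv {σ : Perm (Fin (m + 3))} (hσ : MovesAtMostOne σ) :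
    MovesAtMostOne σ⁻¹ := by
  intro j
  obtain ⟨i, rfl⟩ := σ.surjective j
  rcases hσ i with h | h | h <;> rw [Perm.inv_def, σ.symm_apply_apply, h] <;> simp

theorem MovesAtMostOne.eq_finRotate {σ : Perm (Fin (m + 3))} (hσ : MovesAtMostOne σ)
    {i : Fin (m + 3)} (h₀ : σ i = i + 1) (h₁ : σ (i + 1) = i + 1 + 1) :
    σ = finRotate (m + 3) := by
  have step : ∀ a, σ a = a + 1 → σ (a + 1) = a + 1 + 1 →
      σ (a + 1 + 1) = a + 1 + 1 + 1 := by
    intro a ha ha₁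
    rcases hσ (a + 1 + 1) with h | h | h
    · exact absurd (σ.injective (h.trans ha₁.symm)) (Fin.add_one_ne_self _)
    · exact h
    · rw [add_sub_cancel_right] at h
      exact absurd (σ.injective (h.trans ha.symm)) (Fin.add_one_add_one_ne_self a)
  have shift : ∀ k : ℕ, σ (i + k) = i + k + 1 ∧ σ (i + k + 1) = i + k + 1 + 1 := by
    intro k
    induction k with
    | zero => simpa using ⟨h₀, h₁⟩
    | succ k ih =>
      push_cast
      rw [← add_assoc]
      exact ⟨ih.2, step _ ih.1 ih.2⟩
  ext1 j
  simpa using (shift (j - i).val).1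

theorem MovesAtMostOne.eq_finRotate_inv {σ : Perm (Fin (m + 3))} (hσ : MovesAtMostOne σ)
    {i : Fin (m + 3)} (h₀ : σ i = i - 1) (h₁ : σ (i - 1) = i - 1 - 1) :
    σ = (finRotate (m + 3))⁻¹ := by
  rw [← inv_eq_iff_eq_inv]
  refine hσ.inv.eq_finRotate (i := i - 1 - 1) ?_ ?_
  · rw [sub_add_cancel, Perm.inv_eq_iff_eq, h₁]
  · rw [sub_add_cancel, sub_add_cancel, Perm.inv_eq_iff_eq, h₀]

/-- `S` encodes the matching `{s(j, j + 1) | j ∈ S}` of the cycle by the left endpoints of its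
edges. -/
def NoTwoConsecutive (S : Finset (Fin (m + 3))) : Prop :=
  ∀ i ∈ S, i + 1 ∉ S

def matchingFun (S : Finset (Fin (m + 3))) (i : Fin (m + 3)) : Fin (m + 3) :=
  if i ∈ S then i + 1 else if i - 1 ∈ S then i - 1 else i

theorem NoTwoConsecutive.involutive_matchingFun {S : Finset (Fin (m + 3))}
    (hS : NoTwoConsecutive S) : Function.Involutive (matchingFun S) := by
  intro i
  by_cases hi : i ∈ S
  · simp [matchingFun, hi, hS i hi]
  · by_cases hi' : i - 1 ∈ S
    · have := hS _ hi'
      simp_all [matchingFun]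
    · simp [matchingFun, hi, hi']

/-- The product of the transpositions `(j j+1)`, `j ∈ S`, when `NoTwoConsecutive S`;
junk otherwise. -/
noncomputable def matchingPerm (S : Finset (Fin (m + 3))) : Perm (Fin (m + 3)) :=
  if h : Function.Involutive (matchingFun S) then h.toPerm else 1

theorem NoTwoConsecutive.matchingPerm_apply {S : Finset (Fin (m + 3))}
    (hS : NoTwoConsecutive S) (i : Fin (m + 3)) : matchingPerm S i = matchingFun S i := by
  rw [matchingPerm, dif_pos hS.involutive_matchingFun]
  rfl

theorem MovesAtMostOne.exists_matchingPerm {σ : Perm (Fin (m + 3))} (hσ : MovesAtMostOne σ)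
    (h₁ : σ ≠ finRotate (m + 3)) (h₂ : σ ≠ (finRotate (m + 3))⁻¹) :
    ∃ S, NoTwoConsecutive S ∧ matchingPerm S = σ := by
  have back_of_fwd : ∀ i, σ i = i + 1 → σ (i + 1) = i := by
    intro i hi
    rcases hσ (i + 1) with h | h | h
    · exact absurd (σ.injective (h.trans hi.symm)) (Fin.add_one_ne_self i)
    · exact absurd (hσ.eq_finRotate hi h) h₁
    · rwa [add_sub_cancel_right] at h
  have fwd_of_back : ∀ i, σ i = i - 1 → σ (i - 1) = i := by
    intro i hi
    rcases hσ (i - 1) with h | h | h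
    · exact absurd (σ.injective (h.trans hi.symm)) (Fin.sub_one_ne_self i)
    · rwa [sub_add_cancel] at h
    · exact absurd (hσ.eq_finRotate_inv hi h) h₂
  set S : Finset (Fin (m + 3)) := {i | σ i = i + 1}
  have hS : NoTwoConsecutive S := by
    intro i hi hi₁
    simp only [S, Finset.mem_filter, Finset.mem_univ, true_and] at hi hi₁
    exact Fin.add_one_add_one_ne_self i (hi₁.symm.trans (back_of_fwd i hi))
  refine ⟨S, hS, Equiv.ext fun i => ?_⟩
  rw [hS.matchingPerm_apply, matchingFun]
  simp only [S, Finset.mem_filter, Finset.mem_univ, true_and]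
  split_ifs with hi hi'
  · exact hi.symm
  · simpa using (back_of_fwd _ hi').symm
  · rcases hσ i with h | h | h
    · exact h.symm
    · exact absurd h hi
    · exact absurd (by rw [sub_add_cancel]; exact fwd_of_back i h) hi'

theorem NoTwoConsecutive.disjoint {S : Finset (Fin (m + 3))} (hS : NoTwoConsecutive S) :
    Disjoint S (S.image (· + 1)) :=
  Finset.disjoint_left.mpr fun i hi hi' => hS (i - 1) (Finset.mem_image_add_right_iff.mp hi')
    (by rwa [sub_add_cancel])

theorem NoTwoConsecutive.matchingPerm_sq {S : Finset (Fin (m + 3))} (hS : NoTwoConsecutive S) :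
    matchingPerm S ^ 2 = 1 :=
  Equiv.ext fun i => by
    simp [sq, hS.matchingPerm_apply, hS.involutive_matchingFun i]

theorem NoTwoConsecutive.support_matchingPerm {S : Finset (Fin (m + 3))}
    (hS : NoTwoConsecutive S) : (matchingPerm S).support = S ∪ S.image (· + 1) := by
  ext i
  rw [Perm.mem_support, hS.matchingPerm_apply, Finset.mem_union, Finset.mem_image_add_right_iff,
    matchingFun]
  split_ifs with hi hi'
  · simp [hi]
  · simp [hi']
  · simp [hi, hi']

theorem NoTwoConsecutive.sign_matchingPerm {S : Finset (Fin (m + 3))}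
    (hS : NoTwoConsecutive S) : Perm.sign (matchingPerm S) = (-1) ^ #S := by
  rw [Equiv.Perm.sign_eq_neg_one_pow_card_support_div_two hS.matchingPerm_sq,
    hS.support_matchingPerm, Finset.card_union_of_disjoint hS.disjoint,
    Finset.card_image_of_injective _ (add_left_injective 1), ← two_mul,
    Nat.mul_div_cancel_left _ two_pos]

theorem NoTwoConsecutive.matchingPerm_apply_eq_add_one_iff {S : Finset (Fin (m + 3))}
    (hS : NoTwoConsecutive S) {i : Fin (m + 3)} : matchingPerm S i = i + 1 ↔ i ∈ S := by
  rw [hS.matchingPerm_apply, matchingFun]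
  split_ifs with hi hi'
  · simp [hi]
  · simpa [hi, sub_eq_iff_eq_add] using (Fin.add_one_add_one_ne_self i).symm
  · exact iff_of_false (Fin.add_one_ne_self i).symm hi

theorem NoTwoConsecutive.eq_of_matchingPerm_eq {S T : Finset (Fin (m + 3))}
    (hS : NoTwoConsecutive S) (hT : NoTwoConsecutive T) (h : matchingPerm S = matchingPerm T) :
    S = T :=
  Finset.ext fun i => by
    rw [← hS.matchingPerm_apply_eq_add_one_iff, ← hT.matchingPerm_apply_eq_add_one_iff, h]

theorem NoTwoConsecutive.prod_matchingPerm {R : Type*} [CommMonoid R]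
    {S : Finset (Fin (m + 3))} (hS : NoTwoConsecutive S) (g : Fin (m + 3) → Fin (m + 3) → R) :
    ∏ i, g (matchingPerm S i) i =
      (∏ j ∈ S, g j (j + 1) * g (j + 1) j) * ∏ i ∈ (S ∪ S.image (· + 1))ᶜ, g i i := by
  rw [← Finset.prod_mul_prod_compl (S ∪ S.image (· + 1)), Finset.prod_union hS.disjoint,
    Finset.prod_image (add_left_injective 1).injOn, ← Finset.prod_mul_distrib]
  congr 1
  · refine Finset.prod_congr rfl fun j hj => ?_
    simp [hS.matchingPerm_apply, matchingFun, hj, hS j hj, mul_comm]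
  · refine Finset.prod_congr rfl fun i hi => ?_
    simp only [Finset.mem_compl, Finset.mem_union, Finset.mem_image_add_right_iff, not_or] at hi
    simp [hS.matchingPerm_apply, matchingFun, hi.1, hi.2]

theorem finRotate_sq_ne_one : finRotate (m + 3) ^ 2 ≠ 1 := fun h =>
  Fin.add_one_add_one_ne_self (0 : Fin (m + 3)) (by simpa [sq] using congr($h 0))

theorem prod_finRotate_apply {R : Type*} [CommMonoid R] (g : Fin (m + 3) → Fin (m + 3) → R) :
    ∏ i, g (finRotate (m + 3) i) i = ∏ i, g (i + 1) i := by
  simp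

theorem prod_finRotate_inv_apply {R : Type*} [CommMonoid R]
    (g : Fin (m + 3) → Fin (m + 3) → R) :
    ∏ i, g ((finRotate (m + 3))⁻¹ i) i = ∏ i, g i (i + 1) := by
  rw [← Equiv.prod_comp (finRotate (m + 3))]
  simp

noncomputable def tridiagonalPerms : Finset (Perm (Fin (m + 3))) :=
  insert (finRotate (m + 3)) (insert (finRotate (m + 3))⁻¹
    (({S | NoTwoConsecutive S} : Finset _).image matchingPerm))

theorem MovesAtMostOne.mem_tridiagonalPerms {σ : Perm (Fin (m + 3))} (hσ : MovesAtMostOne σ) :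
    σ ∈ tridiagonalPerms := by
  rw [tridiagonalPerms, Finset.mem_insert, Finset.mem_insert, Finset.mem_image]
  by_cases h₁ : σ = finRotate (m + 3)
  · exact Or.inl h₁
  by_cases h₂ : σ = (finRotate (m + 3))⁻¹
  · exact Or.inr (Or.inl h₂)
  obtain ⟨S, hS, rfl⟩ := hσ.exists_matchingPerm h₁ h₂
  exact Or.inr (Or.inr ⟨S, Finset.mem_filter.mpr ⟨Finset.mem_univ _, hS⟩, rfl⟩)

theorem sum_tridiagonalPerms {R : Type*} [AddCommMonoid R] (t : Perm (Fin (m + 3)) → R) :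
    ∑ σ ∈ tridiagonalPerms, t σ = t (finRotate (m + 3)) + t (finRotate (m + 3))⁻¹ +
      ∑ S with NoTwoConsecutive S, t (matchingPerm S) := by
  set rot := finRotate (m + 3)
  have hgood : ∀ S ∈ ({S | NoTwoConsecutive S} : Finset (Finset (Fin (m + 3)))),
      NoTwoConsecutive S := fun S hS => (Finset.mem_filter.mp hS).2
  -- the two rotations have order `m + 3 ≥ 3`, the matching permutations order at most `2`
  have ne_rot : ∀ σ : Perm (Fin (m + 3)), σ ^ 2 = 1 → σ ≠ rot ∧ σ ≠ rot⁻¹ :=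
    fun σ hσ => ⟨by rintro rfl; exact finRotate_sq_ne_one hσ,
      by rintro rfl; exact finRotate_sq_ne_one (by rwa [inv_pow, inv_eq_one] at hσ)⟩
  have rot_ne_inv : rot ≠ rot⁻¹ := fun h =>
    finRotate_sq_ne_one (by rwa [sq, mul_eq_one_iff_eq_inv])
  rw [tridiagonalPerms, Finset.sum_insert, Finset.sum_insert, Finset.sum_image, add_assoc]
  · exact fun S hS T hT => (hgood S hS).eq_of_matchingPerm_eq (hgood T hT)
  · rw [Finset.mem_image]
    rintro ⟨S, hS, h⟩
    exact (ne_rot _ (hgood S hS).matchingPerm_sq).2 h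
  · rw [Finset.mem_insert, Finset.mem_image]
    rintro (h | ⟨S, hS, h⟩)
    exacts [rot_ne_inv h, (ne_rot _ (hgood S hS).matchingPerm_sq).1 h]

theorem det_eq_of_periodicTridiagonal {R : Type*} [CommRing R]
    (N : Matrix (Fin (m + 3)) (Fin (m + 3)) R)
    (hN : ∀ i j, j ≠ i → j ≠ i + 1 → j ≠ i - 1 → N j i = 0) :
    N.det = (-1) ^ (m + 3 - 1) * (∏ i, N (i + 1) i + ∏ i, N i (i + 1)) +
      ∑ S with NoTwoConsecutive S,
        (-1) ^ #S * (∏ j ∈ S, N j (j + 1) * N (j + 1) j) *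
          ∏ i ∈ (S ∪ S.image (· + 1))ᶜ, N i i := by
  have hmoves : ∀ σ ∉ tridiagonalPerms, ∃ i, N (σ i) i = 0 := by
    intro σ hσ
    by_contra! hne
    refine hσ (MovesAtMostOne.mem_tridiagonalPerms fun i => ?_)
    by_contra! h
    exact hne i (hN i (σ i) h.1 h.2.1 h.2.2)
  rw [Matrix.det_eq_sum_of_exists_eq_zero N _ hmoves, sum_tridiagonalPerms,
    Finset.sum_congr rfl fun S hS => by
      rw [(Finset.mem_filter.mp hS).2.sign_matchingPerm,
        (Finset.mem_filter.mp hS).2.prod_matchingPerm N]]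
  simp only [Perm.sign_inv, prod_finRotate_apply N, prod_finRotate_inv_apply N, sign_finRotate,
    Units.smul_def]
  push_cast [zsmul_eq_mul]
  simp only [mul_assoc, mul_add]

section CycleLaplacian

variable {F : Type*} [Field F] (φ : Fin (m + 3) → Fin (m + 3) → F) (x : F)

theorem sgDeg_cycleGraph (v : Fin (m + 3)) : sgDeg (cycleGraph (m + 3)) v = 2 := by
  rw [sgDeg_eq_degree, cycleGraph_degree_three_le]

theorem smul_one_sub_sgLap_cycleGraph_apply_self (i : Fin (m + 3)) :
    (x • 1 - sgLap (cycleGraph (m + 3)) φ) i i = x - 2 := by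
  rw [smul_one_sub_sgLap_apply, if_pos rfl, sgDeg_cycleGraph, Nat.cast_ofNat]

theorem smul_one_sub_sgLap_cycleGraph_apply_add_one_self (i : Fin (m + 3)) :
    (x • 1 - sgLap (cycleGraph (m + 3)) φ) (i + 1) i = φ (i + 1) i := by
  rw [smul_one_sub_sgLap_apply]
  simp [cycleGraph_adj_iff]

theorem smul_one_sub_sgLap_cycleGraph_apply_self_add_one (i : Fin (m + 3)) :
    (x • 1 - sgLap (cycleGraph (m + 3)) φ) i (i + 1) = φ i (i + 1) := by
  rw [smul_one_sub_sgLap_apply]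
  simp [(Fin.add_one_ne_self i).symm, cycleGraph_adj_iff]

theorem smul_one_sub_sgLap_cycleGraph_apply_eq_zero {i j : Fin (m + 3)} (h₀ : j ≠ i)
    (h₁ : j ≠ i + 1) (h₂ : j ≠ i - 1) :
    (x • 1 - sgLap (cycleGraph (m + 3)) φ) j i = 0 := by
  rw [smul_one_sub_sgLap_apply]
  simp [cycleGraph_adj_iff, h₀, h₁, h₂]

end CycleLaplacian

def cycleEdge (j : Fin (m + 3)) : Sym2 (Fin (m + 3)) := s(j, j + 1)

theorem cycleEdge_injective : Function.Injective (cycleEdge (m := m)) := by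
  intro i j h
  rcases Sym2.eq_iff.mp h with ⟨h, -⟩ | ⟨h₁, h₂⟩
  · exact h
  · exact absurd (by rw [h₂]; exact h₁.symm) (Fin.add_one_add_one_ne_self i)

theorem mem_cycleEdge {v j : Fin (m + 3)} : v ∈ cycleEdge j ↔ v = j ∨ v = j + 1 :=
  Sym2.mem_iff

theorem cycleEdge_mem_edgeSet (j : Fin (m + 3)) :
    cycleEdge j ∈ (cycleGraph (m + 3)).edgeSet :=
  show (cycleGraph (m + 3)).Adj j (j + 1) from
    cycleGraph_adj_iff.mpr (Or.inr (add_sub_cancel_right j 1).symm)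

theorem exists_cycleEdge_eq {e : Sym2 (Fin (m + 3))} (he : e ∈ (cycleGraph (m + 3)).edgeSet) :
    ∃ j, cycleEdge j = e := by
  induction e using Sym2.ind with
  | h u v =>
    rcases cycleGraph_adj_iff.mp (show (cycleGraph (m + 3)).Adj u v from he) with h | h
    · exact ⟨v, by rw [cycleEdge, h, Sym2.eq_swap]⟩
    · exact ⟨u, by rw [cycleEdge, h, sub_add_cancel]⟩

theorem isMatchingSet_cycleGraph_iff {M : Finset (Sym2 (Fin (m + 3)))} :
    IsMatchingSet (cycleGraph (m + 3)) M ↔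
      ∃ S, NoTwoConsecutive S ∧ S.image cycleEdge = M := by
  constructor
  · rintro ⟨hedge, hdisj⟩
    refine ⟨({j | cycleEdge j ∈ M} : Finset _), fun j hj hj₁ => ?_, ?_⟩
    · simp only [Finset.mem_filter, Finset.mem_univ, true_and] at hj hj₁
      exact hdisj _ hj _ hj₁ (fun h => Fin.add_one_ne_self j (cycleEdge_injective h).symm)
        (j + 1) ⟨mem_cycleEdge.mpr (Or.inr rfl), mem_cycleEdge.mpr (Or.inl rfl)⟩
    · ext e
      simp only [Finset.mem_image, Finset.mem_filter, Finset.mem_univ, true_and]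
      refine ⟨fun ⟨j, hj, hje⟩ => hje ▸ hj, fun he => ?_⟩
      obtain ⟨j, rfl⟩ := exists_cycleEdge_eq (hedge e he)
      exact ⟨j, he, rfl⟩
  · rintro ⟨S, hS, rfl⟩
    simp only [IsMatchingSet, Finset.forall_mem_image]
    refine ⟨fun j _ => cycleEdge_mem_edgeSet j, fun i hi j hj hij v ⟨hvi, hvj⟩ => ?_⟩
    rw [mem_cycleEdge] at hvi hvj
    rcases hvi with rfl | rfl <;> rcases hvj with h | h
    · exact hij (congrArg cycleEdge h)
    · exact hS j hj (h ▸ hi)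
    · exact hS i hi (h ▸ hj)
    · exact hij (congrArg cycleEdge (add_right_cancel h))

theorem sum_matchings_cycleGraph {R : Type*} [AddCommMonoid R]
    (t : Finset (Sym2 (Fin (m + 3))) → R) :
    ∑ M, (if M.Nonempty ∧ IsMatchingSet (cycleGraph (m + 3)) M then t M else 0) =
      ∑ S ∈ ({S | NoTwoConsecutive S} : Finset _).erase ∅, t (S.image cycleEdge) := by
  rw [← Finset.sum_filter, ← Finset.sum_image fun S _ T _ h =>
    Finset.image_injective cycleEdge_injective h]
  congr 1
  ext M
  simp only [Finset.mem_filter, Finset.mem_univ, true_and, Finset.mem_image, Finset.mem_erase,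
    isMatchingSet_cycleGraph_iff, ← Finset.nonempty_iff_ne_empty]
  constructor
  · rintro ⟨hne, S, hS, rfl⟩
    exact ⟨S, ⟨Finset.image_nonempty.mp hne, hS⟩, rfl⟩
  · rintro ⟨S, ⟨hne, hS⟩, rfl⟩
    exact ⟨hne.image _, S, hS, rfl⟩

theorem filter_forall_notMem_image_cycleEdge (S : Finset (Fin (m + 3))) :
    ({v | ∀ e ∈ S.image cycleEdge, v ∉ e} : Finset _) = (S ∪ S.image (· + 1))ᶜ := by
  ext v
  simp only [Finset.mem_filter, Finset.mem_univ, true_and, Finset.forall_mem_image,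
    mem_cycleEdge, Finset.mem_compl, Finset.mem_union, Finset.mem_image_add_right_iff, not_or]
  constructor
  · intro h
    exact ⟨fun hv => (h hv).1 rfl, fun hv => (h hv).2 (sub_add_cancel v 1).symm⟩
  · rintro ⟨hv, hv'⟩ j hj
    refine ⟨fun h => hv (h ▸ hj), fun h => hv' ?_⟩
    rwa [h, add_sub_cancel_right]

theorem sum_matchings_cycleGraph_gain {F : Type*} [Field F]
    (φ : Fin (m + 3) → Fin (m + 3) → F) (y : F) :
    ∑ M : Finset (Sym2 (Fin (m + 3))),
      (if M.Nonempty ∧ IsMatchingSet (cycleGraph (m + 3)) M then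
        (-1 : F) ^ M.card * (∏ e ∈ M, sgGainSq φ e) *
          ∏ _ ∈ Finset.univ.filter (fun v => ∀ e ∈ M, v ∉ e), y
      else 0) =
      ∑ S ∈ ({S | NoTwoConsecutive S} : Finset _).erase ∅,
        (-1) ^ #S * (∏ j ∈ S, φ j (j + 1) * φ (j + 1) j) *
          ∏ _ ∈ (S ∪ S.image (· + 1))ᶜ, y := by
  rw [sum_matchings_cycleGraph]
  refine Finset.sum_congr rfl fun S _ => ?_
  rw [Finset.card_image_of_injective _ cycleEdge_injective,
    Finset.prod_image cycleEdge_injective.injOn, filter_forall_notMem_image_cycleEdge]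
  rfl

end SkewGainCycle

open SkewGainCycle

theorem skewGainCycle_laplacian_charpoly_general
    [Field F] (m : ℕ)
    (f : F → F) (hf1 : f 1 = 1)
    (hfmul : ∀ x y : F, f (x * y) = f x * f y)
    (φ : Fin (m + 3) → Fin (m + 3) → F)
    (hφf : ∀ u v, (cycleGraph (m + 3)).Adj u v → φ v u = f (φ u v)) :
    ∀ x : F,
      (x • (1 : Matrix (Fin (m + 3)) (Fin (m + 3)) F) - sgLap (cycleGraph (m + 3)) φ).det =
        (x - 2) ^ (m + 3) +
          (-1 : F) ^ (m + 3 - 1) *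
            ((∏ i : Fin (m + 3), φ i (i + 1)) + f (∏ i : Fin (m + 3), φ i (i + 1))) +
          ∑ M : Finset (Sym2 (Fin (m + 3))),
            if M.Nonempty ∧ IsMatchingSet (cycleGraph (m + 3)) M then
              (-1 : F) ^ M.card * (∏ e ∈ M, sgGainSq φ e) *
                ∏ v ∈ Finset.univ.filter (fun v => ∀ e ∈ M, v ∉ e), (x - 2)
            else 0 := by
  intro x
  let fHom : F →* F := ⟨⟨f, hf1⟩, hfmul⟩
  have hrev : ∏ i, φ (i + 1) i = f (∏ i, φ i (i + 1)) := calc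
    ∏ i, φ (i + 1) i = ∏ i, fHom (φ i (i + 1)) :=
      Finset.prod_congr rfl fun i _ => hφf i (i + 1) (cycleEdge_mem_edgeSet i)
    _ = f (∏ i, φ i (i + 1)) := (map_prod fHom _ _).symm
  have hempty : ∅ ∈ ({S | NoTwoConsecutive S} : Finset (Finset (Fin (m + 3)))) :=
    Finset.mem_filter.mpr ⟨Finset.mem_univ _, fun i hi => absurd hi (Finset.notMem_empty i)⟩
  rw [det_eq_of_periodicTridiagonal _ fun i j => smul_one_sub_sgLap_cycleGraph_apply_eq_zero φ x,
    sum_matchings_cycleGraph_gain, ← Finset.add_sum_erase _ _ hempty]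
  simp only [smul_one_sub_sgLap_cycleGraph_apply_self, hrev,
    smul_one_sub_sgLap_cycleGraph_apply_add_one_self,
    smul_one_sub_sgLap_cycleGraph_apply_self_add_one, Finset.card_empty, pow_zero,
    Finset.prod_empty, one_mul, Finset.image_empty, Finset.union_empty, Finset.compl_empty,
    Finset.prod_const, Finset.card_univ, Fintype.card_fin]
  ring

/-- **Laplacian characteristic polynomial of a skew gain cycle** (Corollary 2.6).
For a skew gain graph on the cycle `C_n` with `n = m + 3 ≥ 3` vertices (vertices `Fin n` in
cyclic order, so that `φ(C_n) = Π_i φ(i, i+1)`), the Laplacian characteristic polynomial is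
`(x-2)^n + (-1)^(n-1) (φ(C_n) + f(φ(C_n)))
  + Σ_M (-1)^{|M|} (Π_{e ∈ M} g(φ(e))) Π_{v ∉ V(M)} (x - 2)`,
the sum running over all nonempty matchings `M` of `C_n`. -/
theorem skewGainCycle_laplacian_charpoly
    [Field F] [CharZero F] (m : ℕ)
    (f : F → F) (hf0 : f 0 = 0) (hf1 : f 1 = 1)
    (hfmul : ∀ x y : F, f (x * y) = f x * f y) (hfinv : ∀ x : F, f (f x) = x)
    (φ : Fin (m + 3) → Fin (m + 3) → F)
    (hφ0 : ∀ u v, (cycleGraph (m + 3)).Adj u v → φ u v ≠ 0)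
    (hφf : ∀ u v, (cycleGraph (m + 3)).Adj u v → φ v u = f (φ u v)) :
    ∀ x : F,
      (x • (1 : Matrix (Fin (m + 3)) (Fin (m + 3)) F) - sgLap (cycleGraph (m + 3)) φ).det =
        (x - 2) ^ (m + 3) +
          (-1 : F) ^ (m + 3 - 1) *
            ((∏ i : Fin (m + 3), φ i (i + 1)) + f (∏ i : Fin (m + 3), φ i (i + 1))) +
          ∑ M : Finset (Sym2 (Fin (m + 3))),
            if M.Nonempty ∧ IsMatchingSet (cycleGraph (m + 3)) M then
              (-1 : F) ^ M.card * (∏ e ∈ M, sgGainSq φ e) *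
                ∏ v ∈ Finset.univ.filter (fun v => ∀ e ∈ M, v ∉ e), (x - 2)
            else 0 :=
  skewGainCycle_laplacian_charpoly_general m f hf1 hfmul φ hφf
end

section
/- Let Φ_f = (K_{1,n}, F^×, φ, f) be a skew gain graph whose underlying graph is the star K_{1,n} (one center adjacent to n leaves, n ≥ 1). Then its Laplacian characteristic polynomial is χ(Φ_f, x) = (x − 1)^n (x − n) − (x − 1)^{n−1} · Σ_{e ∈ E(K_{1,n})} g(φ(e)). -/
open scoped Classical
open Matrix Finset SimpleGraph

variable {F V : Type*}

/-! `xI − L` of the star is an arrowhead matrix `M` with corner `d = x − n`, diagonal `t = x − 1`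
on the leaves, and the gains `φ(center, j)`, `φ(j, center)` in its first row and column.
Multiplying `M` on the right by `[[t, 0], [−c, 1]]` clears the lower-left block, so
`t · det M = tⁿ (t d − Σ aⱼ cⱼ)`. Cancelling `t` is legitimate in `R[X]` with `t = X`, and
specialising `X` gives `det M` for every `t`. The skew relation `φ(j, center) = f(φ(center, j))`
turns each `aⱼ cⱼ` into `g(φ(e))`. -/

namespace Matrix

variable {R ι : Type*} [CommRing R] [Fintype ι] [DecidableEq ι]

def arrowhead (d t : R) (a c : ι → R) : Matrix (Fin 1 ⊕ ι) (Fin 1 ⊕ ι) R :=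
  fromBlocks (of fun _ _ => d) (replicateRow (Fin 1) a) (replicateCol (Fin 1) c) (t • 1)

theorem mul_det_arrowhead (d t : R) (a c : ι → R) :
    t * (arrowhead d t a c).det = t ^ Fintype.card ι * (t * d - ∑ i, a i * c i) := by
  have hfactor : arrowhead d t a c * fromBlocks (of fun _ _ => t) 0 (-replicateCol (Fin 1) c) 1 =
      fromBlocks (of fun _ _ => t * d - ∑ i, a i * c i) (replicateRow (Fin 1) a) 0 (t • 1) := by
    rw [arrowhead, fromBlocks_multiply]
    congr 1 <;> ext <;> simp [mul_apply, mul_comm, sub_eq_add_neg]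
  have hdet := congrArg det hfactor
  rw [det_mul, det_fromBlocks_zero₁₂, det_fromBlocks_zero₂₁] at hdet
  simpa [det_fin_one, det_smul, mul_comm] using hdet

open Polynomial in
theorem det_arrowhead (d t : R) (a c : ι → R) :
    (arrowhead d t a c).det =
      t ^ Fintype.card ι * d - t ^ (Fintype.card ι - 1) * ∑ i, a i * c i := by
  have hgeneric : (arrowhead (C d) X (C ∘ a) (C ∘ c)).det =
      X ^ Fintype.card ι * C d - X ^ (Fintype.card ι - 1) * C (∑ i, a i * c i) := by
    apply isRegular_X.left
    dsimp only
    rw [mul_det_arrowhead]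
    rcases (Fintype.card ι).eq_zero_or_pos with h | h
    · simp [Fintype.card_eq_zero_iff.mp h]
    · obtain ⟨k, hk⟩ := Nat.exists_eq_add_of_lt h
      simp only [hk, add_tsub_cancel_right, Function.comp_apply, map_sum, map_mul]
      ring
  have hspecialize : (arrowhead (C d) X (C ∘ a) (C ∘ c)).map (eval t) = arrowhead d t a c := by
    ext (i | i) (j | j) <;> simp [arrowhead, one_apply, apply_ite (eval t)]
  have hdet := RingHom.map_det (evalRingHom t) (arrowhead (C d) X (C ∘ a) (C ∘ c))
  rw [RingHom.mapMatrix_apply, coe_evalRingHom, hspecialize, hgeneric] at hdet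
  simpa only [eval_sub, eval_mul, eval_pow, eval_X, eval_C] using hdet.symm

end Matrix

theorem sgDeg_completeBipartiteGraph_inl {α β : Type*} [Fintype α] [Fintype β] (a : α) :
    sgDeg (completeBipartiteGraph α β) (Sum.inl a) = Fintype.card β := by
  rw [sgDeg, Finset.card_filter, Fintype.sum_sum_type]
  simp

theorem sgDeg_completeBipartiteGraph_inr {α β : Type*} [Fintype α] [Fintype β] (b : β) :
    sgDeg (completeBipartiteGraph α β) (Sum.inr b) = Fintype.card α := by
  rw [sgDeg, Finset.card_filter, Fintype.sum_sum_type]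
  simp

theorem smul_one_sub_sgLap_star {ι : Type*} [Field F] [Fintype ι] [DecidableEq ι]
    (φ : Fin 1 ⊕ ι → Fin 1 ⊕ ι → F) (x : F) :
    x • 1 - sgLap (completeBipartiteGraph (Fin 1) ι) φ =
      arrowhead (x - Fintype.card ι) (x - 1)
        (fun j => φ (Sum.inl 0) (Sum.inr j)) (fun j => φ (Sum.inr j) (Sum.inl 0)) := by
  ext (i | i) (j | j)
  · simp [sgLap, sgAdj, arrowhead, Subsingleton.elim i j, sgDeg_completeBipartiteGraph_inl]
  · simp [sgLap, sgAdj, arrowhead, Subsingleton.elim i 0]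
  · simp [sgLap, sgAdj, arrowhead, Subsingleton.elim j 0]
  · rcases eq_or_ne i j with rfl | h <;>
      simp [sgLap, sgAdj, arrowhead, one_apply, sgDeg_completeBipartiteGraph_inr, *]

theorem skewGainStar_laplacian_charpoly_general
    [Field F] (n : ℕ)
    (f : F → F)
    (φ : (Fin 1 ⊕ Fin n) → (Fin 1 ⊕ Fin n) → F)
    (hφf : ∀ u v, (completeBipartiteGraph (Fin 1) (Fin n)).Adj u v → φ v u = f (φ u v)) :
    ∀ x : F,
      (x • (1 : Matrix (Fin 1 ⊕ Fin n) (Fin 1 ⊕ Fin n) F) -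
          sgLap (completeBipartiteGraph (Fin 1) (Fin n)) φ).det =
        (x - 1) ^ n * (x - (n : F)) -
          (x - 1) ^ (n - 1) *
            ∑ j : Fin n, φ (Sum.inl 0) (Sum.inr j) * f (φ (Sum.inl 0) (Sum.inr j)) := by
  intro x
  rw [smul_one_sub_sgLap_star, det_arrowhead, Fintype.card_fin]
  congr 2
  exact Finset.sum_congr rfl fun j _ => by rw [hφf (Sum.inl 0) (Sum.inr j) (by simp)]

/-- **Laplacian characteristic polynomial of a skew gain star** (Corollary 2.7).
For a skew gain graph on the star `K_{1,n}` (modelled as the complete bipartite graph with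
parts `Fin 1` and `Fin n`, the single vertex being the center), the Laplacian characteristic
polynomial is `(x-1)^n (x-n) - (x-1)^(n-1) Σ_{e ∈ E} g(φ(e))`, where `g(y) = y * f(y)`. -/
theorem skewGainStar_laplacian_charpoly
    [Field F] [CharZero F] (n : ℕ) (hn : 1 ≤ n)
    (f : F → F) (hf0 : f 0 = 0) (hf1 : f 1 = 1)
    (hfmul : ∀ x y : F, f (x * y) = f x * f y) (hfinv : ∀ x : F, f (f x) = x)
    (φ : (Fin 1 ⊕ Fin n) → (Fin 1 ⊕ Fin n) → F)
    (hφ0 : ∀ u v, (completeBipartiteGraph (Fin 1) (Fin n)).Adj u v → φ u v ≠ 0)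
    (hφf : ∀ u v, (completeBipartiteGraph (Fin 1) (Fin n)).Adj u v → φ v u = f (φ u v)) :
    ∀ x : F,
      (x • (1 : Matrix (Fin 1 ⊕ Fin n) (Fin 1 ⊕ Fin n) F) -
          sgLap (completeBipartiteGraph (Fin 1) (Fin n)) φ).det =
        (x - 1) ^ n * (x - (n : F)) -
          (x - 1) ^ (n - 1) *
            ∑ j : Fin n, φ (Sum.inl 0) (Sum.inr j) * f (φ (Sum.inl 0) (Sum.inr j)) :=
  skewGainStar_laplacian_charpoly_general n f φ hφf
end

section
/- Let Φ_f = (K_{1,n}, F^×, φ, f) be a skew gain graph whose underlying graph is the star K_{1,n} (one center adjacent to n leaves, n ≥ 1). Then det(L(Φ_f)) = n − Σ_{e ∈ E(K_{1,n})} g(φ(e)), where the integer n is cast into F. -/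
/-!
The Laplacian of a skew gain graph on the complete bipartite graph with parts `V`, `W` is a
block matrix with scalar diagonal blocks `|W| • 1` and `|V| • 1`. For the star (`|V| = 1`, centre
`c`) the lower block is the identity, so the determinant is the Schur complement
`n - Σ_j φ(c, j) φ(j, c)`, and the skew condition
`φ(j, c) = f(φ(c, j))` turns each summand into `g(φ(c, j))`.
-/

open scoped Classical
open Matrix Finset SimpleGraph

variable {F V : Type*}

variable {W : Type*} [Fintype V] [Fintype W]

lemma sgDeg_completeBipartiteGraph_inl_s6 (v : V) :
    sgDeg (completeBipartiteGraph V W) (Sum.inl v) = Fintype.card W := by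
  have : (univ.filter fun u => (completeBipartiteGraph V W).Adj (Sum.inl v) u) =
      univ.map Function.Embedding.inr := by
    ext (u | w) <;> simp
  rw [sgDeg, this, card_map, card_univ]

lemma sgDeg_completeBipartiteGraph_inr_s6 (w : W) :
    sgDeg (completeBipartiteGraph V W) (Sum.inr w) = Fintype.card V := by
  have : (univ.filter fun u => (completeBipartiteGraph V W).Adj (Sum.inr w) u) =
      univ.map Function.Embedding.inl := by
    ext (v | u) <;> simp
  rw [sgDeg, this, card_map, card_univ]

lemma sgLap_completeBipartiteGraph [DecidableEq V] [DecidableEq W] [Field F] (φ : V ⊕ W → V ⊕ W → F) :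
    sgLap (completeBipartiteGraph V W) φ =
      fromBlocks (Fintype.card W : Matrix V V F) (-of fun v w => φ (Sum.inl v) (Sum.inr w))
        (-of fun w v => φ (Sum.inr w) (Sum.inl v)) (Fintype.card V : Matrix W W F) := by
  ext (v | w) (v' | w') <;>
    simp [sgLap, sgAdj, diagonal, sgDeg_completeBipartiteGraph_inl_s6,
      sgDeg_completeBipartiteGraph_inr_s6, Matrix.natCast_apply, Nat.cast_ite]

lemma det_sgLap_star [DecidableEq W] [Field F] (φ : Fin 1 ⊕ W → Fin 1 ⊕ W → F) :
    (sgLap (completeBipartiteGraph (Fin 1) W) φ).det =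
      Fintype.card W - ∑ w, φ (Sum.inl 0) (Sum.inr w) * φ (Sum.inr w) (Sum.inl 0) := by
  rw [sgLap_completeBipartiteGraph, Fintype.card_fin, Nat.cast_one, det_fromBlocks_one₂₂, det_unique]
  simp [mul_apply, Matrix.natCast_apply]

theorem skewGainStar_laplacian_det_general
    [Field F] (n : ℕ)
    (f : F → F)
    (φ : (Fin 1 ⊕ Fin n) → (Fin 1 ⊕ Fin n) → F)
    (hφf : ∀ u v, (completeBipartiteGraph (Fin 1) (Fin n)).Adj u v → φ v u = f (φ u v)) :
    (sgLap (completeBipartiteGraph (Fin 1) (Fin n)) φ).det =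
      (n : F) - ∑ j : Fin n, φ (Sum.inl 0) (Sum.inr j) * f (φ (Sum.inl 0) (Sum.inr j)) := by
  rw [det_sgLap_star, Fintype.card_fin]
  congr 1
  exact sum_congr rfl fun j _ => by rw [hφf (Sum.inl 0) (Sum.inr j) (by simp)]

/-- **Determinant of the Laplacian of a skew gain star** (Theorem 2.11).
For a skew gain graph on the star `K_{1,n}` (modelled as the complete bipartite graph with
parts `Fin 1` and `Fin n`, the single vertex being the center),
`det L(Φ_f) = n - Σ_{e ∈ E} g(φ(e))`, where `g(y) = y * f(y)`. -/
theorem skewGainStar_laplacian_det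
    [Field F] [CharZero F] (n : ℕ) (hn : 1 ≤ n)
    (f : F → F) (hf0 : f 0 = 0) (hf1 : f 1 = 1)
    (hfmul : ∀ x y : F, f (x * y) = f x * f y) (hfinv : ∀ x : F, f (f x) = x)
    (φ : (Fin 1 ⊕ Fin n) → (Fin 1 ⊕ Fin n) → F)
    (hφ0 : ∀ u v, (completeBipartiteGraph (Fin 1) (Fin n)).Adj u v → φ u v ≠ 0)
    (hφf : ∀ u v, (completeBipartiteGraph (Fin 1) (Fin n)).Adj u v → φ v u = f (φ u v)) :
    (sgLap (completeBipartiteGraph (Fin 1) (Fin n)) φ).det =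
      (n : F) - ∑ j : Fin n, φ (Sum.inl 0) (Sum.inr j) * f (φ (Sum.inl 0) (Sum.inr j)) :=
  skewGainStar_laplacian_det_general n f φ hφf
end

section
/- Let Φ_f = (G, F^×, φ, f) be a skew gain graph on a finite simple graph G with a fixed orientation of each edge, and fix for each edge e an element s(e) ∈ F with s(e)² = g(φ(e)). Then L_g(Φ_f) = H(Φ_f) · H^#(Φ_f), where L_g(Φ_f) = D_g(Φ_f) − A(Φ_f) is the g-Laplacian, H(Φ_f) is the incidence matrix, and H^#(Φ_f) is its modified transpose. -/
/-!
Each edge `e`, oriented from `t` to `h`, contributes to `H * H^#` the outer product of its column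
of `H` and its row of `H^#`. Writing `a = φ(e)`, `b = f(a)` and using `s(e)² = a b`, this is the
matrix supported on `{t, h}²` with block `[[s(e), -a], [-b, s(e)]]`, and `b = φ(h, t)`.
Summing over edges, the diagonal collects the `g`-degrees, and off the diagonal the entry at
`(u, v)` is `-φ(u, v)` if some edge joins `u` and `v` (at most one does, `G` being simple) and
`0` otherwise.
-/

open scoped Classical
open Matrix Finset

section SkewIncidence

variable {F V E : Type*} [Field F] [DecidableEq V]
  (f : F → F) (t h : E → V) (φ : V → V → F) (s : E → F)

def skewIncidence : Matrix V E F :=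
  of fun v e => if t e = v then φ (t e) (h e) * f (φ (t e) (h e))
    else if h e = v then -(f (φ (t e) (h e)) * s e) else 0

def skewIncidenceSharp : Matrix E V F :=
  of fun e v => if t e = v then (s e)⁻¹
    else if h e = v then -(f (φ (t e) (h e)))⁻¹ else 0

variable {f t h φ s} {e : E}

theorem skewIncidence_mul_skewIncidenceSharp_self_term
    (hfφ : f (φ (t e) (h e)) ≠ 0) (hs0 : s e ≠ 0)
    (hs : s e ^ 2 = φ (t e) (h e) * f (φ (t e) (h e))) (v : V) :
    skewIncidence f t h φ s v e * skewIncidenceSharp f t h φ s e v =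
      if t e = v ∨ h e = v then s e else 0 := by
  by_cases ht : t e = v
  · subst ht
    simp [skewIncidence, skewIncidenceSharp, ← hs, sq, hs0]
  by_cases hh : h e = v
  · subst hh
    simp only [skewIncidence, skewIncidenceSharp, of_apply, if_neg ht, if_true, or_true]
    field_simp
  · simp [skewIncidence, ht, hh]

theorem skewIncidence_mul_skewIncidenceSharp_ne_term
    (hfφ : f (φ (t e) (h e)) ≠ 0) (hs0 : s e ≠ 0)
    (hφf : φ (h e) (t e) = f (φ (t e) (h e))) {u v : V} (huv : u ≠ v) :
    skewIncidence f t h φ s u e * skewIncidenceSharp f t h φ s e v =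
      if (t e = u ∧ h e = v) ∨ (t e = v ∧ h e = u) then -φ u v else 0 := by
  by_cases ht : t e = u
  · subst ht
    by_cases hh : h e = v
    · subst hh
      simp [skewIncidence, skewIncidenceSharp, huv, hfφ]
    · simp [skewIncidenceSharp, huv, hh]
  by_cases hh : h e = u
  · subst hh
    by_cases ht' : t e = v
    · subst ht'
      simp [skewIncidence, skewIncidenceSharp, ht, hs0, hφf]
    · simp [skewIncidenceSharp, ht', huv]
  · simp [skewIncidence, ht, hh]

variable [Fintype E]

theorem skewIncidence_mul_skewIncidenceSharp_apply_self
    (hfφ : ∀ e, f (φ (t e) (h e)) ≠ 0) (hs0 : ∀ e, s e ≠ 0)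
    (hs : ∀ e, s e ^ 2 = φ (t e) (h e) * f (φ (t e) (h e))) (v : V) :
    (skewIncidence f t h φ s * skewIncidenceSharp f t h φ s) v v =
      ∑ e ∈ univ.filter (fun e => t e = v ∨ h e = v), s e := by
  rw [mul_apply, sum_filter]
  exact sum_congr rfl fun e _ =>
    skewIncidence_mul_skewIncidenceSharp_self_term (hfφ e) (hs0 e) (hs e) v

theorem skewIncidence_mul_skewIncidenceSharp_apply_of_ne
    (hsimple : ∀ e e', s(t e, h e) = s(t e', h e') → e = e')
    (hfφ : ∀ e, f (φ (t e) (h e)) ≠ 0) (hs0 : ∀ e, s e ≠ 0)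
    (hφf : ∀ e, φ (h e) (t e) = f (φ (t e) (h e))) {u v : V} (huv : u ≠ v) :
    (skewIncidence f t h φ s * skewIncidenceSharp f t h φ s) u v =
      -if ∃ e, (t e = u ∧ h e = v) ∨ (t e = v ∧ h e = u) then φ u v else 0 := by
  have hunique : ∀ e e', (t e = u ∧ h e = v) ∨ (t e = v ∧ h e = u) →
      (t e' = u ∧ h e' = v) ∨ (t e' = v ∧ h e' = u) → e = e' := by
    intro e e' he he'
    exact hsimple e e' ((Sym2.eq_iff.2 he).trans (Sym2.eq_iff.2 he').symm)
  rw [mul_apply, sum_congr rfl fun e _ =>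
      skewIncidence_mul_skewIncidenceSharp_ne_term (hfφ e) (hs0 e) (hφf e) huv,
    Fintype.sum_ite_eq_ite_exists _ hunique, apply_ite Neg.neg, neg_zero]

end SkewIncidence

-- The graph is given by the edge type `E` with tail and head maps `t h : E → V`;
-- `Dg`, `A`, `H` and `Hs` are `D_g(Φ_f)`, `A(Φ_f)`, `H(Φ_f)` and `H^#(Φ_f)`.
theorem skewGain_gLaplacian_eq_incidence_mul_general
    {F V E : Type*} [Field F] [DecidableEq V]
    [Fintype E]
    (f : F → F) (hf0 : f 0 = 0)
    (hfinv : ∀ x : F, f (f x) = x)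
    (t h : E → V) (hth : ∀ e, t e ≠ h e)
    (hsimple : ∀ e e', s(t e, h e) = s(t e', h e') → e = e')
    (φ : V → V → F)
    (hφ0 : ∀ e, φ (t e) (h e) ≠ 0)
    (hφf : ∀ e, φ (h e) (t e) = f (φ (t e) (h e)))
    (s : E → F) (hs : ∀ e, s e ^ 2 = φ (t e) (h e) * f (φ (t e) (h e)))
    (A : Matrix V V F)
    (hA : ∀ u v, A u v =
      if ∃ e, (t e = u ∧ h e = v) ∨ (t e = v ∧ h e = u) then φ u v else 0)
    (Dg : Matrix V V F)
    (hDg : Dg = Matrix.diagonal fun v =>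
      ∑ e ∈ Finset.univ.filter (fun e => t e = v ∨ h e = v), s e)
    (H : Matrix V E F)
    (hH : ∀ v e, H v e =
      if t e = v then φ (t e) (h e) * f (φ (t e) (h e))
      else if h e = v then -(f (φ (t e) (h e)) * s e) else 0)
    (Hs : Matrix E V F)
    (hHs : ∀ e v, Hs e v =
      if t e = v then (s e)⁻¹
      else if h e = v then -(f (φ (t e) (h e)))⁻¹ else 0) :
    Dg - A = H * Hs := by
  have hfφ : ∀ e, f (φ (t e) (h e)) ≠ 0 := fun e h0 =>
    hφ0 e (by rw [← hfinv (φ (t e) (h e)), h0, hf0])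
  have hs0 : ∀ e, s e ≠ 0 := fun e h0 =>
    mul_ne_zero (hφ0 e) (hfφ e) (by rw [← hs e, h0, zero_pow two_ne_zero])
  obtain rfl : H = skewIncidence f t h φ s := Matrix.ext hH
  obtain rfl : Hs = skewIncidenceSharp f t h φ s := Matrix.ext hHs
  subst hDg
  ext u v
  rw [Matrix.sub_apply, hA]
  obtain rfl | huv := eq_or_ne u v
  · have hloop : ¬∃ e, (t e = u ∧ h e = u) ∨ (t e = u ∧ h e = u) := by
      rintro ⟨e, ⟨ht, hh⟩ | ⟨ht, hh⟩⟩ <;> exact hth e (ht.trans hh.symm)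
    rw [diagonal_apply_eq, if_neg hloop, sub_zero,
      skewIncidence_mul_skewIncidenceSharp_apply_self hfφ hs0 hs]
  · rw [diagonal_apply_ne _ huv, zero_sub,
      skewIncidence_mul_skewIncidenceSharp_apply_of_ne hsimple hfφ hs0 hφf huv]

/-- **The g-Laplacian factors through the incidence matrix** (Theorem 3.4):
`L_g(Φ_f) = H(Φ_f) * H^#(Φ_f)`.

Here the underlying graph is described by a finite edge type `E` with tail and head maps
`t h : E → V` (each edge `e` is oriented from `t e` to `h e`, and distinct edges join distinct
pairs of vertices), `φ` is the skew gain function (with `φ(h e, t e) = f(φ(t e, h e)) ≠ 0`),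
`s e` is a fixed square root of `g(φ(e)) = φ(e) f(φ(e))`, `A` is the adjacency matrix,
`Dg` the `g`-degree matrix, `H` the incidence matrix and `Hs = H^#` its modified transpose. -/
theorem skewGain_gLaplacian_eq_incidence_mul
    {F V E : Type*} [Field F] [CharZero F] [Fintype V] [DecidableEq V]
    [Fintype E] [DecidableEq E]
    (f : F → F) (hf0 : f 0 = 0) (hf1 : f 1 = 1)
    (hfmul : ∀ x y : F, f (x * y) = f x * f y) (hfinv : ∀ x : F, f (f x) = x)
    (t h : E → V) (hth : ∀ e, t e ≠ h e)
    (hsimple : ∀ e e', s(t e, h e) = s(t e', h e') → e = e')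
    (φ : V → V → F)
    (hφ0 : ∀ e, φ (t e) (h e) ≠ 0)
    (hφf : ∀ e, φ (h e) (t e) = f (φ (t e) (h e)))
    (s : E → F) (hs : ∀ e, s e ^ 2 = φ (t e) (h e) * f (φ (t e) (h e)))
    (A : Matrix V V F)
    (hA : ∀ u v, A u v =
      if ∃ e, (t e = u ∧ h e = v) ∨ (t e = v ∧ h e = u) then φ u v else 0)
    (Dg : Matrix V V F)
    (hDg : Dg = Matrix.diagonal fun v =>
      ∑ e ∈ Finset.univ.filter (fun e => t e = v ∨ h e = v), s e)
    (H : Matrix V E F)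
    (hH : ∀ v e, H v e =
      if t e = v then φ (t e) (h e) * f (φ (t e) (h e))
      else if h e = v then -(f (φ (t e) (h e)) * s e) else 0)
    (Hs : Matrix E V F)
    (hHs : ∀ e v, Hs e v =
      if t e = v then (s e)⁻¹
      else if h e = v then -(f (φ (t e) (h e)))⁻¹ else 0) :
    Dg - A = H * Hs :=
  skewGain_gLaplacian_eq_incidence_mul_general f hf0 hfinv t h hth hsimple φ hφ0 hφf s hs A hA Dg
    hDg H hH Hs hHs
end

section
/- Let Φ_f = (G, F^×, φ, f) be a skew gain graph whose underlying graph G is a tree of order n, and fix for each edge e an element s(e) ∈ F with s(e)² = g(φ(e)). Then det(L_g(Φ_f)) = 0. -/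
/-!
Along every edge `φ(u,v) φ(v,u) = φ(u,v) f(φ(u,v)) = s(uv)²`, so the edge gains
`c(u,v) = s(uv) / φ(u,v)` satisfy `c(v,u) = c(u,v)⁻¹`. On a tree such a gain is a coboundary:
there is a nonzero `x` with `x_v = c(u,v) x_u` on every edge. Then `φ(u,v) x_v = s(uv) x_u`, so
row `u` of `L_g x` is `Σ_v s(uv) x_u - Σ_v φ(u,v) x_v = 0`.
-/

open scoped Classical
open Matrix Finset SimpleGraph

variable {F V : Type*}

/-- The skew gain `φ(W)` of a walk `W`: the product of the skew gains of its oriented edges. -/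
noncomputable def walkGain [Field F] {G : SimpleGraph V} {u v : V} (φ : V → V → F)
    (w : G.Walk u v) : F :=
  (w.darts.map fun d => φ d.fst d.snd).prod

/-- The `g`-degree of a vertex `v`: the sum, over the edges `e` incident to `v`, of the chosen
square roots `s e` of `g(φ(e))`. -/
noncomputable def sgGDeg [Fintype V] [DecidableEq V] [Field F] (G : SimpleGraph V)
    (s : Sym2 V → F) (v : V) : F :=
  ∑ e ∈ Finset.univ.filter (fun e : Sym2 V => e ∈ G.edgeSet ∧ v ∈ e), s e

/-- The `g`-Laplacian matrix `L_g(Φ_f) = D_g(Φ_f) - A(Φ_f)` of a skew gain graph, relative to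
the chosen square roots `s e` of `g(φ(e))`. -/
noncomputable def sgGLap [Fintype V] [DecidableEq V] [Field F] (G : SimpleGraph V)
    (φ : V → V → F) (s : Sym2 V → F) : Matrix V V F :=
  Matrix.diagonal (sgGDeg G s) - sgAdj G φ

namespace SimpleGraph

variable [Field F] {G : SimpleGraph V}

@[simp]
lemma walkGain_nil (c : V → V → F) (u : V) : walkGain c (Walk.nil : G.Walk u u) = 1 := by
  simp [walkGain]

lemma walkGain_concat (c : V → V → F) {r u v : V} (p : G.Walk r u) (h : G.Adj u v) :
    walkGain c (p.concat h) = walkGain c p * c u v := by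
  simp [walkGain, Walk.darts_concat]

lemma IsAcyclic.eq_concat_or_eq_concat (hG : G.IsAcyclic) {r u v : V} {p : G.Walk r u}
    {q : G.Walk r v} (hp : p.IsPath) (hq : q.IsPath) (h : G.Adj u v) :
    q = p.concat h ∨ p = q.concat h.symm := by
  by_cases hu : u ∈ q.support
  · exact .inl (hG.path_concat hp hq h hu)
  · exact .inr (hG.path_concat hq hp h.symm
      (hG.mem_support_of_ne_mem_support_of_adj_of_isPath hp hq h hu))

/-- The potential is the gain of the path from a fixed root. -/
theorem IsTree.exists_ne_zero_potential (hG : G.IsTree) (c : V → V → F)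
    (hc : ∀ u v, G.Adj u v → c u v * c v u = 1) :
    ∃ x : V → F, x ≠ 0 ∧ ∀ u v, G.Adj u v → x v = c u v * x u := by
  obtain ⟨r⟩ := hG.connected.nonempty
  choose p hp _ using hG.existsUnique_path r
  refine ⟨fun v => walkGain c (p v), fun h0 => ?_, fun u v h => ?_⟩
  · have hr : walkGain c (p r) = 1 := by
      rw [(hG.existsUnique_path r r).unique (hp r) Walk.IsPath.nil, walkGain_nil]
    exact one_ne_zero (hr.symm.trans (congrFun h0 r))
  change walkGain c (p v) = c u v * walkGain c (p u)
  rcases hG.isAcyclic.eq_concat_or_eq_concat (hp u) (hp v) h with hv | hu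
  · rw [hv, walkGain_concat, mul_comm]
  · rw [hu, walkGain_concat, mul_left_comm, hc u v h, mul_one]

end SimpleGraph

section Laplacian

variable [Field F] [Fintype V]

lemma sgGDeg_eq_sum_neighborFinset [DecidableEq V] (G : SimpleGraph V) (s : Sym2 V → F)
    (u : V) :
    sgGDeg G s u = ∑ v ∈ G.neighborFinset u, s s(u, v) := by
  have hinc : univ.filter (fun e : Sym2 V => e ∈ G.edgeSet ∧ u ∈ e) =
      (G.neighborFinset u).image (fun v => s(u, v)) := by
    ext e
    induction e with
    | _ a b =>
      simp only [mem_filter, mem_univ, true_and, mem_image, mem_neighborFinset, mem_edgeSet,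
        Sym2.mem_iff, Sym2.eq_iff]
      grind [G.adj_symm]
  rw [sgGDeg, hinc, sum_image fun _ _ _ _ => Sym2.congr_right.1]

lemma sgAdj_mulVec_apply (G : SimpleGraph V) (φ : V → V → F) (x : V → F) (u : V) :
    (sgAdj G φ *ᵥ x) u = ∑ v ∈ G.neighborFinset u, φ u v * x v := by
  simp [mulVec, dotProduct, sgAdj, ite_mul, ← sum_filter, neighborFinset_eq_filter]

lemma sgGLap_mulVec_eq_zero [DecidableEq V] {G : SimpleGraph V} {φ : V → V → F}
    {s : Sym2 V → F} {x : V → F}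
    (hx : ∀ u v, G.Adj u v → φ u v * x v = s s(u, v) * x u) : sgGLap G φ s *ᵥ x = 0 := by
  funext u
  rw [sgGLap, sub_mulVec, Pi.sub_apply, mulVec_diagonal, sgAdj_mulVec_apply,
    sgGDeg_eq_sum_neighborFinset, sum_mul, Pi.zero_apply, sub_eq_zero]
  exact sum_congr rfl fun v hv => (hx u v ((G.mem_neighborFinset u v).1 hv)).symm

end Laplacian

theorem skewGainTree_gLaplacian_det_general
    [Field F] [Fintype V] [DecidableEq V]
    (G : SimpleGraph V) (htree : G.IsTree)
    (f : F → F)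
    (φ : V → V → F)
    (hφ0 : ∀ u v, G.Adj u v → φ u v ≠ 0)
    (hφf : ∀ u v, G.Adj u v → φ v u = f (φ u v))
    (s : Sym2 V → F)
    (hs : ∀ u v, G.Adj u v → s s(u, v) ^ 2 = φ u v * f (φ u v)) :
    (sgGLap G φ s).det = 0 := by
  have hφφ : ∀ u v, G.Adj u v → s s(u, v) ^ 2 = φ u v * φ v u := fun u v h => by
    rw [hs u v h, hφf u v h]
  obtain ⟨x, hx0, hx⟩ := htree.exists_ne_zero_potential (fun u v => s s(u, v) / φ u v)
    fun u v h => by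
      rw [Sym2.eq_swap (a := v), div_mul_div_comm, ← sq, hφφ u v h,
        div_self (mul_ne_zero (hφ0 u v h) (hφ0 v u h.symm))]
  refine exists_mulVec_eq_zero_iff.mp ⟨x, hx0, sgGLap_mulVec_eq_zero fun u v h => ?_⟩
  rw [hx u v h, ← mul_assoc, mul_div_cancel₀ _ (hφ0 u v h)]

/-- **The g-Laplacian of a skew gain tree is singular** (Theorem 3.7).
If the underlying graph of a skew gain graph is a tree, then `det L_g(Φ_f) = 0`. -/
theorem skewGainTree_gLaplacian_det
    [Field F] [CharZero F] [Fintype V] [DecidableEq V]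
    (G : SimpleGraph V) (htree : G.IsTree)
    (f : F → F) (hf0 : f 0 = 0) (hf1 : f 1 = 1)
    (hfmul : ∀ x y : F, f (x * y) = f x * f y) (hfinv : ∀ x : F, f (f x) = x)
    (φ : V → V → F)
    (hφ0 : ∀ u v, G.Adj u v → φ u v ≠ 0)
    (hφf : ∀ u v, G.Adj u v → φ v u = f (φ u v))
    (s : Sym2 V → F)
    (hs : ∀ u v, G.Adj u v → s s(u, v) ^ 2 = φ u v * f (φ u v)) :
    (sgGLap G φ s).det = 0 :=
  skewGainTree_gLaplacian_det_general G htree f φ hφ0 hφf s hs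
end

section
/- Let Φ_f = (G, F^×, φ, f) be a skew gain graph on a finite simple graph G with n vertices, fix for each edge an element s(e) ∈ F with s(e)² = g(φ(e)), and let Ψ be a spanning subgraph of G having exactly n edges (with s and φ restricted to its edges). If det(L_g(Ψ)) ≠ 0, then Ψ is an essential spanning subgraph of G, i.e., every connected component of Ψ is a 1-tree (connected with number of edges equal to number of vertices). -/
/-!
If a component `K` of `Ψ` had fewer edges than vertices, the linear conditions
`y v = 0` for `v ∉ K` and `s(e) y(a) = φ(a,b) y(b)` for the edges `e = ab` of `K` (one
orientation each) would number fewer than `|V|`, so some `y ≠ 0` satisfies them all. Since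
`s(e)² = φ(a,b) φ(b,a)`, the condition for one orientation of an edge implies it for the other,
and then every row of `L_g(Ψ) y` is the sum of these conditions over the neighbours of its
vertex, so `L_g(Ψ)` is singular. Hence every component has at least as many edges as vertices,
and as both counts sum to `n`, they agree on every component.
-/



open scoped Classical
open Matrix Finset SimpleGraph

variable {F V : Type*}

/-- The vertex set of the connected component `K` of `Ψ`. -/
noncomputable def compVerts [Fintype V] (Ψ : SimpleGraph V) (K : Ψ.ConnectedComponent) :
    Finset V :=
  Finset.univ.filter fun v => Ψ.connectedComponentMk v = K

/-- The edge set of the connected component `K` of `Ψ`: the edges of `Ψ` all of whose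
endpoints lie in `K`. -/
noncomputable def compEdges [Fintype V] [DecidableEq V] (Ψ : SimpleGraph V)
    (K : Ψ.ConnectedComponent) : Finset (Sym2 V) :=
  Finset.univ.filter fun e : Sym2 V =>
    e ∈ Ψ.edgeSet ∧ ∀ v ∈ e, Ψ.connectedComponentMk v = K

theorem mul_eq_mul_symm_of_sq_eq_mul {R : Type*} [CommRing R] [IsDomain R] {p q s x y : R}
    (hp : p ≠ 0) (hs : s ^ 2 = p * q) (h : s * x = p * y) : s * y = q * x :=
  mul_left_cancel₀ hp (by linear_combination (-s) * h + x * hs)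

theorem exists_ne_zero_forall_apply_eq_zero {K ι κ : Type*} [Field K] [Fintype ι] [Fintype κ]
    (ℓ : κ → (ι → K) →ₗ[K] K) (hcard : Fintype.card κ < Fintype.card ι) :
    ∃ y ≠ 0, ∀ k, ℓ k y = 0 := by
  have hker : LinearMap.ker (LinearMap.pi ℓ) ≠ ⊥ :=
    LinearMap.ker_ne_bot_of_finrank_lt (by simpa [Module.finrank_pi] using hcard)
  obtain ⟨y, hy, hy0⟩ := (Submodule.ne_bot_iff _).mp hker
  exact ⟨y, hy0, fun k => congrFun (LinearMap.mem_ker.mp hy) k⟩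

namespace SimpleGraph

variable (Ψ : SimpleGraph V)

theorem connectedComponentMk_eq_of_mem_edgeSet {e : Sym2 V} (he : e ∈ Ψ.edgeSet) {v w : V}
    (hv : v ∈ e) (hw : w ∈ e) : Ψ.connectedComponentMk v = Ψ.connectedComponentMk w := by
  induction e using Sym2.ind with
  | _ a b =>
    have hab := ConnectedComponent.connectedComponentMk_eq_of_adj (Ψ.mem_edgeSet.mp he)
    rcases Sym2.mem_iff.mp hv with rfl | rfl <;> rcases Sym2.mem_iff.mp hw with rfl | rfl <;>
      simp [hab]

variable [Fintype V] [DecidableEq V]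

theorem sum_card_compVerts : ∑ K, #(compVerts Ψ K) = Fintype.card V :=
  (card_eq_sum_card_fiberwise fun v _ => mem_univ (Ψ.connectedComponentMk v)).symm

theorem mem_compEdges_iff {e : Sym2 V} (he : e ∈ Ψ.edgeSet) {v : V} (hv : v ∈ e)
    (K : Ψ.ConnectedComponent) : e ∈ compEdges Ψ K ↔ Ψ.connectedComponentMk v = K := by
  simp only [compEdges, mem_filter, mem_univ, true_and, he]
  exact ⟨fun h => h v hv, fun h w hw =>
    (Ψ.connectedComponentMk_eq_of_mem_edgeSet he hw hv).trans h⟩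

theorem sum_card_compEdges :
    ∑ K, #(compEdges Ψ K) = #(univ.filter fun e : Sym2 V => e ∈ Ψ.edgeSet) := by
  rw [card_eq_sum_card_fiberwise fun e _ => mem_univ (Ψ.connectedComponentMk e.out.1)]
  refine sum_congr rfl fun K _ => congrArg card ?_
  ext e
  by_cases he : e ∈ Ψ.edgeSet
  · simp [mem_compEdges_iff Ψ he e.out_fst_mem, he]
  · simp [compEdges, he]

variable [Field F] (φ : V → V → F) (s : Sym2 V → F)

theorem sgGDeg_eq_sum_neighborFinset (v : V) :
    sgGDeg Ψ s v = ∑ u ∈ Ψ.neighborFinset v, s s(v, u) := by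
  rw [← sum_image fun _ _ _ _ h => Sym2.congr_right.mp h]
  refine sum_congr ?_ fun _ _ => rfl
  ext e
  induction e using Sym2.ind with
  | _ a b =>
    simp only [mem_filter, mem_univ, true_and, mem_image, mem_neighborFinset, mem_edgeSet]
    constructor
    · rintro ⟨hab, hv⟩
      rcases Sym2.mem_iff.mp hv with rfl | rfl
      · exact ⟨b, hab, rfl⟩
      · exact ⟨a, hab.symm, Sym2.eq_swap⟩
    · rintro ⟨u, hvu, he⟩
      rcases Sym2.eq_iff.mp he with ⟨rfl, rfl⟩ | ⟨rfl, rfl⟩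
      · exact ⟨hvu, Sym2.mem_mk_left _ _⟩
      · exact ⟨hvu.symm, Sym2.mem_mk_right _ _⟩

theorem sgGLap_mulVec_apply (y : V → F) (v : V) :
    (sgGLap Ψ φ s *ᵥ y) v =
      ∑ u ∈ Ψ.neighborFinset v, (s s(v, u) * y v - φ v u * y u) := by
  rw [sgGLap, sub_mulVec, Pi.sub_apply, mulVec_diagonal, sgGDeg_eq_sum_neighborFinset,
    sum_sub_distrib, sum_mul]
  congr 1
  simp only [mulVec, dotProduct, sgAdj, of_apply, ite_mul, zero_mul]
  rw [← sum_filter, neighborFinset_eq_filter]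

theorem sgGLap_mulVec_eq_zero {y : V → F}
    (hy : ∀ a b, Ψ.Adj a b → s s(a, b) * y a = φ a b * y b) : sgGLap Ψ φ s *ᵥ y = 0 := by
  ext v
  rw [sgGLap_mulVec_apply, Pi.zero_apply]
  exact sum_eq_zero fun u hu =>
    sub_eq_zero.mpr (hy v u ((Ψ.mem_neighborFinset v u).mp hu))

theorem exists_ne_zero_supported_compVerts_of_card_lt {K : Ψ.ConnectedComponent}
    (hlt : #(compEdges Ψ K) < #(compVerts Ψ K)) :
    ∃ y : V → F, y ≠ 0 ∧ (∀ v, Ψ.connectedComponentMk v ≠ K → y v = 0) ∧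
      ∀ e ∈ compEdges Ψ K, s e * y e.out.1 = φ e.out.1 e.out.2 * y e.out.2 := by
  let ℓ : (↥(compVerts Ψ K)ᶜ ⊕ ↥(compEdges Ψ K)) → (V → F) →ₗ[F] F :=
    Sum.elim (fun v => LinearMap.proj v.1) fun e =>
      s e.1 • LinearMap.proj e.1.out.1 - φ e.1.out.1 e.1.out.2 • LinearMap.proj e.1.out.2
  obtain ⟨y, hy0, hy⟩ := exists_ne_zero_forall_apply_eq_zero ℓ (by
    rw [Fintype.card_sum, Fintype.card_coe, Fintype.card_coe, card_compl]
    have := card_le_univ (compVerts Ψ K)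
    omega)
  refine ⟨y, hy0, fun v hv => hy (.inl ⟨v, by simpa [compVerts] using hv⟩), fun e he => ?_⟩
  simpa [ℓ, sub_eq_zero] using hy (.inr ⟨e, he⟩)

variable {Ψ φ s}

theorem mul_eq_mul_of_adj_of_compEdges (hφ : ∀ a b, Ψ.Adj a b → φ a b ≠ 0)
    (hs : ∀ a b, Ψ.Adj a b → s s(a, b) ^ 2 = φ a b * φ b a) {K : Ψ.ConnectedComponent}
    {y : V → F} (hsupp : ∀ v, Ψ.connectedComponentMk v ≠ K → y v = 0)
    (hrel : ∀ e ∈ compEdges Ψ K, s e * y e.out.1 = φ e.out.1 e.out.2 * y e.out.2)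
    {a b : V} (hab : Ψ.Adj a b) : s s(a, b) * y a = φ a b * y b := by
  by_cases haK : Ψ.connectedComponentMk a = K
  · have h := hrel _
      ((mem_compEdges_iff Ψ (Ψ.mem_edgeSet.mpr hab) (Sym2.mem_mk_left a b) K).mpr haK)
    have hout : s((s(a, b)).out.1, (s(a, b)).out.2) = s(a, b) := (s(a, b)).out_eq
    rcases Sym2.eq_iff.mp hout with ⟨h₁, h₂⟩ | ⟨h₁, h₂⟩
    · rwa [h₁, h₂] at h
    · rw [h₁, h₂] at h
      exact mul_eq_mul_symm_of_sq_eq_mul (hφ b a hab.symm) ((hs a b hab).trans (mul_comm _ _)) h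
  · have hbK : Ψ.connectedComponentMk b ≠ K := by
      rwa [← ConnectedComponent.connectedComponentMk_eq_of_adj hab]
    rw [hsupp a haK, hsupp b hbK, mul_zero, mul_zero]

theorem det_sgGLap_eq_zero_of_card_compEdges_lt (hφ : ∀ a b, Ψ.Adj a b → φ a b ≠ 0)
    (hs : ∀ a b, Ψ.Adj a b → s s(a, b) ^ 2 = φ a b * φ b a) {K : Ψ.ConnectedComponent}
    (hlt : #(compEdges Ψ K) < #(compVerts Ψ K)) : (sgGLap Ψ φ s).det = 0 := by
  obtain ⟨y, hy0, hsupp, hrel⟩ := exists_ne_zero_supported_compVerts_of_card_lt Ψ φ s hlt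
  exact exists_mulVec_eq_zero_iff.mp ⟨y, hy0,
    sgGLap_mulVec_eq_zero Ψ φ s fun _ _ => mul_eq_mul_of_adj_of_compEdges hφ hs hsupp hrel⟩

end SimpleGraph

theorem skewGain_gLaplacian_det_ne_zero_essential_general
    [Field F] [Fintype V] [DecidableEq V]
    (G Ψ : SimpleGraph V) (hΨG : Ψ ≤ G)
    (hΨcard : (Finset.univ.filter (fun e : Sym2 V => e ∈ Ψ.edgeSet)).card = Fintype.card V)
    (f : F → F)
    (φ : V → V → F)
    (hφ0 : ∀ u v, G.Adj u v → φ u v ≠ 0)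
    (hφf : ∀ u v, G.Adj u v → φ v u = f (φ u v))
    (s : Sym2 V → F)
    (hs : ∀ u v, G.Adj u v → s s(u, v) ^ 2 = φ u v * f (φ u v))
    (hdet : (sgGLap Ψ φ s).det ≠ 0) :
    ∀ K : Ψ.ConnectedComponent, (compEdges Ψ K).card = (compVerts Ψ K).card := by
  have hle (K : Ψ.ConnectedComponent) : #(compVerts Ψ K) ≤ #(compEdges Ψ K) :=
    not_lt.mp fun hlt => hdet <| det_sgGLap_eq_zero_of_card_compEdges_lt
      (fun a b hab => hφ0 a b (hΨG hab))
      (fun a b hab => by rw [hs a b (hΨG hab), hφf a b (hΨG hab)]) hlt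
  have hsum : ∑ K, #(compVerts Ψ K) = ∑ K, #(compEdges Ψ K) := by
    rw [sum_card_compVerts, sum_card_compEdges, hΨcard]
  intro K
  exact ((sum_eq_sum_iff_of_le fun K _ => hle K).mp hsum K (mem_univ K)).symm

/-- **Nonsingular g-Laplacian forces an essential spanning subgraph** (Lemma 3.11).
Let `Φ_f` be a skew gain graph on `G` (with `n` vertices), and let `Ψ` be a spanning subgraph
of `G` with exactly `n` edges (with the skew gains `φ` and the square roots `s` restricted to
its edges).  If `det L_g(Ψ) ≠ 0`, then `Ψ` is an essential spanning subgraph of `G`, i.e.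
every connected component of `Ψ` is a `1`-tree: it has as many edges as vertices (its
connectivity being automatic). -/
theorem skewGain_gLaplacian_det_ne_zero_essential
    [Field F] [CharZero F] [Fintype V] [DecidableEq V]
    (G Ψ : SimpleGraph V) (hΨG : Ψ ≤ G)
    (hΨcard : (Finset.univ.filter (fun e : Sym2 V => e ∈ Ψ.edgeSet)).card = Fintype.card V)
    (f : F → F) (hf0 : f 0 = 0) (hf1 : f 1 = 1)
    (hfmul : ∀ x y : F, f (x * y) = f x * f y) (hfinv : ∀ x : F, f (f x) = x)
    (φ : V → V → F)
    (hφ0 : ∀ u v, G.Adj u v → φ u v ≠ 0)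
    (hφf : ∀ u v, G.Adj u v → φ v u = f (φ u v))
    (s : Sym2 V → F)
    (hs : ∀ u v, G.Adj u v → s s(u, v) ^ 2 = φ u v * f (φ u v))
    (hdet : (sgGLap Ψ φ s).det ≠ 0) :
    ∀ K : Ψ.ConnectedComponent, (compEdges Ψ K).card = (compVerts Ψ K).card :=
  skewGain_gLaplacian_det_ne_zero_essential_general G Ψ hΨG hΨcard f φ hφ0 hφf s hs hdet
end
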